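/- arXiv:1302.2274 — 5 statements merged into one kernel-verified Lean document; each statement's English description precedes it below -/
import Mathlib

section
/- For n ≥ 1, the number of 132-avoiding permutations of length n with no match of MMP(1,0,0,1) equals n; these are exactly the identity permutation together with the permutations n(n-1)…(n-k)12…(n-k-1) for k = 0,…,n-2. -/
open Finset

/-- σ avoids the classical pattern 132. -/
def avoids132 {n : ℕ} (σ : Equiv.Perm (Fin n)) : Prop :=
  ¬ ∃ i j k : Fin n, i < j ∧ j < k ∧ σ i < σ k ∧ σ k < σ j

/-- position `i` matches the quadrant marked mesh pattern MMP(a,b,c,d) in σ. -/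
def mmpMatch {n : ℕ} (a b c d : ℕ) (σ : Equiv.Perm (Fin n)) (i : Fin n) : Prop :=
  a ≤ (Finset.univ.filter fun j => i < j ∧ σ i < σ j).card ∧
  b ≤ (Finset.univ.filter fun j => j < i ∧ σ i < σ j).card ∧
  c ≤ (Finset.univ.filter fun j => j < i ∧ σ j < σ i).card ∧
  d ≤ (Finset.univ.filter fun j => i < j ∧ σ j < σ i).card

/-- the number of positions of σ matching MMP(a,b,c,d). -/
noncomputable def mmp {n : ℕ} (a b c d : ℕ) (σ : Equiv.Perm (Fin n)) : ℕ :=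
  Nat.card {i : Fin n // mmpMatch a b c d σ i}

-- mmp = 0 iff no match
lemma mmp_eq_zero_iff {n : ℕ} (σ : Equiv.Perm (Fin n)) (a b c d : ℕ) :
    mmp a b c d σ = 0 ↔ ∀ i, ¬ mmpMatch a b c d σ i := by
  classical
  rw [mmp, Nat.card_eq_zero]
  constructor
  · rintro (h | h)
    · intro i hi; exact h.false ⟨i, hi⟩
    · exact absurd h (Finite.not_infinite inferInstance)
  · intro h; left; exact ⟨fun x => h x.1 x.2⟩

lemma match_iff {n : ℕ} (σ : Equiv.Perm (Fin n)) (i : Fin n) :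
    mmpMatch 1 0 0 1 σ i ↔ (∃ j, i < j ∧ σ i < σ j) ∧ (∃ j, i < j ∧ σ j < σ i) := by
  classical
  unfold mmpMatch
  simp only [Nat.one_le_iff_ne_zero, Nat.zero_le, true_and, and_true, ← Nat.pos_iff_ne_zero,
    Finset.card_pos, Finset.filter_nonempty_iff, Finset.mem_univ, true_and]

lemma card_lt_val {n : ℕ} (σ : Equiv.Perm (Fin n)) (i : Fin n) :
    (univ.filter fun j => σ j < σ i).card = (σ i : ℕ) := by
  classical
  have : (univ.filter fun j => σ j < σ i) = (Finset.Iio (σ i)).map σ.symm.toEmbedding := by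
    ext j
    simp [Equiv.symm_apply_eq]
  rw [this, Finset.card_map, Fin.card_Iio]

def famFun (n k : ℕ) (i : Fin n) : Fin n :=
  ⟨if (i : ℕ) ≤ k then n - 1 - (i : ℕ) else (i : ℕ) - k - 1, by
    have := i.isLt; split <;> omega⟩

lemma famFun_inj (n k : ℕ) : Function.Injective (famFun n k) := by
  intro a b hab
  have ha := a.isLt; have hb := b.isLt
  have h := Fin.val_eq_of_eq hab
  simp only [famFun] at h
  apply Fin.ext
  split at h <;> split at h <;> omega

noncomputable def famPerm (n k : ℕ) : Equiv.Perm (Fin n) :=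
  Equiv.ofBijective _ (Finite.injective_iff_bijective.mp (famFun_inj n k))

lemma famPerm_apply (n k : ℕ) (i : Fin n) :
    ((famPerm n k i : Fin n) : ℕ) = if (i : ℕ) ≤ k then n - 1 - (i : ℕ) else (i : ℕ) - k - 1 :=
  rfl

lemma famPerm_avoids (n k : ℕ) (hk : k ≤ n - 2) : avoids132 (famPerm n k) := by
  rintro ⟨i, j, l, hij, hjl, h1, h2⟩
  have hi := i.isLt; have hj := j.isLt; have hl := l.isLt
  simp only [Fin.lt_def, famPerm_apply] at hij hjl h1 h2
  split_ifs at h1 h2 <;> omega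

lemma famPerm_mmp (n k : ℕ) (hk : k ≤ n - 2) : mmp 1 0 0 1 (famPerm n k) = 0 := by
  rw [mmp_eq_zero_iff]
  intro i hi
  rw [match_iff] at hi
  obtain ⟨⟨j1, hj1, hv1⟩, ⟨j2, hj2, hv2⟩⟩ := hi
  have hi' := i.isLt; have h1 := j1.isLt; have h2 := j2.isLt
  rw [Fin.lt_def] at hj1 hj2
  simp only [Fin.lt_def, famPerm_apply] at hv1 hv2
  split_ifs at hv1 hv2 <;> omega

lemma one_avoids (n : ℕ) : avoids132 (1 : Equiv.Perm (Fin n)) := by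
  rintro ⟨i, j, l, hij, hjl, h1, h2⟩
  simp only [Equiv.Perm.one_apply] at h1 h2
  exact absurd (h2.trans hjl) (lt_irrefl _)

lemma one_mmp (n : ℕ) : mmp 1 0 0 1 (1 : Equiv.Perm (Fin n)) = 0 := by
  rw [mmp_eq_zero_iff]
  intro i hi
  rw [match_iff] at hi
  obtain ⟨_, ⟨j, hj, hv⟩⟩ := hi
  simp only [Equiv.Perm.one_apply] at hv
  exact absurd hj (lt_asymm hv)

lemma forward {n : ℕ} (σ : Equiv.Perm (Fin n)) (hav : avoids132 σ)
    (h0 : mmp 1 0 0 1 σ = 0) :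
    σ = 1 ∨ ∃ k ≤ n - 2, ∀ i : Fin n,
      (σ i : ℕ) = if (i : ℕ) ≤ k then n - 1 - (i : ℕ) else (i : ℕ) - k - 1 := by
  classical
  rw [mmp_eq_zero_iff] at h0
  have dich : ∀ i : Fin n, (∀ j, i < j → σ j < σ i) ∨ (∀ j, i < j → σ i < σ j) := by
    intro i
    by_contra hcon
    push_neg at hcon
    obtain ⟨⟨j1, hj1, hv1⟩, ⟨j2, hj2, hv2⟩⟩ := hcon
    have h1 : σ i < σ j1 :=
      lt_of_le_of_ne hv1 (fun h => ne_of_lt hj1 (σ.injective h))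
    have h2 : σ j2 < σ i :=
      lt_of_le_of_ne hv2 (fun h => ne_of_gt hj2 (σ.injective h))
    exact h0 i ((match_iff σ i).mpr ⟨⟨j1, hj1, h1⟩, ⟨j2, hj2, h2⟩⟩)
  have high : ∀ i : Fin n, (∃ j, i < j ∧ σ j < σ i) → ∀ j, i < j → σ j < σ i := by
    intro i hi
    rcases dich i with h | h
    · exact h
    · obtain ⟨j, hj, hv⟩ := hi
      exact (lt_asymm hv (h j hj)).elim
  have lower : ∀ i i' : Fin n, i' < i → (∃ j, i < j ∧ σ j < σ i) →
      (∃ j, i' < j ∧ σ j < σ i') := by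
    intro i i' hi' hi
    by_contra hc
    push_neg at hc
    have hlow : ∀ j, i' < j → σ i' < σ j := by
      rcases dich i' with h | h
      · exact ((not_lt.mpr (hc i hi')) (h i hi')).elim
      · exact h
    obtain ⟨j, hj, hv⟩ := hi
    exact hav ⟨i', i, j, hi', hj, hlow j (hi'.trans hj), hv⟩
  by_cases hK : ∃ i : Fin n, ∃ j, i < j ∧ σ j < σ i
  · right
    obtain ⟨i0, hi0⟩ := hK
    set F : Finset (Fin n) := univ.filter (fun i => ∃ j, i < j ∧ σ j < σ i) with hF
    have hFne : F.Nonempty := ⟨i0, by simp [hF, hi0]⟩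
    set kf := F.max' hFne with hkf
    have hkfK : ∃ j, kf < j ∧ σ j < σ kf := by
      have := F.max'_mem hFne
      simp only [hF, mem_filter, mem_univ, true_and] at this
      exact this
    have hmemK : ∀ i : Fin n, i ≤ kf ↔ ∃ j, i < j ∧ σ j < σ i := by
      intro i
      constructor
      · intro hi
        rcases lt_or_eq_of_le hi with h | h
        · exact lower kf i h hkfK
        · rw [h]; exact hkfK
      · intro hi
        exact F.le_max' i (by simp [hF, hi])
    refine ⟨(kf : ℕ), ?_, ?_⟩
    · obtain ⟨j, hj, _⟩ := hkfK
      have := j.isLt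
      have := Fin.lt_def.mp hj
      omega
    · intro i
      have hcard := card_lt_val σ i
      by_cases hik : (i : ℕ) ≤ (kf : ℕ)
      · rw [if_pos hik]
        have hiK : ∃ j, i < j ∧ σ j < σ i := (hmemK i).mp (Fin.le_def.mpr hik)
        have heq : (univ.filter fun j => σ j < σ i) = Finset.Ioi i := by
          ext j
          simp only [mem_filter, mem_univ, true_and, Finset.mem_Ioi]
          constructor
          · intro hv
            by_contra hj
            push_neg at hj
            rcases lt_or_eq_of_le hj with h | h
            · have hjK := (hmemK j).mp (le_of_lt (lt_of_lt_of_le h (Fin.le_def.mpr hik)))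
              exact lt_asymm hv (high j hjK i h)
            · rw [h] at hv; exact lt_irrefl _ hv
          · intro hj
            exact high i hiK j hj
        rw [heq, Fin.card_Ioi] at hcard
        exact hcard.symm
      · rw [if_neg hik]
        push_neg at hik
        have hilow : ∀ j, i < j → σ i < σ j := by
          rcases dich i with h | h
          · intro j hj
            exact absurd (Fin.le_def.mp ((hmemK i).mpr ⟨j, hj, h j hj⟩)) (by omega)
          · exact h
        have heq : (univ.filter fun j => σ j < σ i) = Finset.Ioo kf i := by
          ext j
          simp only [mem_filter, mem_univ, true_and, Finset.mem_Ioo]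
          constructor
          · intro hv
            constructor
            · by_contra hj
              push_neg at hj
              have hjK := (hmemK j).mp hj
              have hji : j < i := lt_of_le_of_lt hj (Fin.lt_def.mpr hik)
              exact lt_asymm hv (high j hjK i hji)
            · by_contra hj
              push_neg at hj
              rcases lt_or_eq_of_le hj with h | h
              · exact lt_asymm hv (hilow j h)
              · rw [← h] at hv; exact lt_irrefl _ hv
          · rintro ⟨hkj, hji⟩
            rcases dich j with h | h
            · exact absurd ((hmemK j).mpr ⟨i, hji, h i hji⟩) (not_le.mpr hkj)
            · exact h i hji
        rw [heq, Fin.card_Ioo] at hcard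
        exact hcard.symm
  · left
    push_neg at hK
    have hmono : ∀ i : Fin n, (σ i : ℕ) = i := by
      intro i
      have heq : (univ.filter fun j => σ j < σ i) = Finset.Iio i := by
        ext j
        simp only [mem_filter, mem_univ, true_and, Finset.mem_Iio]
        constructor
        · intro hv
          by_contra hj
          push_neg at hj
          rcases lt_or_eq_of_le hj with h | h
          · exact not_lt.mpr (hK i j h) hv
          · rw [h] at hv; exact lt_irrefl _ hv
        · intro hj
          exact lt_of_le_of_ne (hK j i hj) (fun h => ne_of_lt hj (σ.injective h))
      have hcard := card_lt_val σ i
      rw [heq, Fin.card_Iio] at hcard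
      exact hcard.symm
    exact Equiv.ext fun i => Fin.ext (by simpa using hmono i)

theorem stmt14 (n : ℕ) (hn : 1 ≤ n) :
    Nat.card {σ : Equiv.Perm (Fin n) // avoids132 σ ∧ mmp 1 0 0 1 σ = 0} = n ∧
    (∀ σ : Equiv.Perm (Fin n), avoids132 σ →
      (mmp 1 0 0 1 σ = 0 ↔
        σ = 1 ∨ ∃ k ≤ n - 2, ∀ i : Fin n,
          (σ i : ℕ) = if (i : ℕ) ≤ k then n - 1 - (i : ℕ) else (i : ℕ) - k - 1)) := by
  classical
  have fam_eq : ∀ (k : ℕ) (σ : Equiv.Perm (Fin n)),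
      (∀ i : Fin n, (σ i : ℕ) = if (i : ℕ) ≤ k then n - 1 - (i : ℕ) else (i : ℕ) - k - 1) →
      σ = famPerm n k := by
    intro k σ hfam
    exact Equiv.ext fun i => Fin.ext ((hfam i).trans (famPerm_apply n k i).symm)
  have hiff : ∀ σ : Equiv.Perm (Fin n), avoids132 σ →
      (mmp 1 0 0 1 σ = 0 ↔
        σ = 1 ∨ ∃ k ≤ n - 2, ∀ i : Fin n,
          (σ i : ℕ) = if (i : ℕ) ≤ k then n - 1 - (i : ℕ) else (i : ℕ) - k - 1) := by
    intro σ hav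
    constructor
    · exact forward σ hav
    · rintro (rfl | ⟨k, hk, hfam⟩)
      · exact one_mmp n
      · rw [fam_eq k σ hfam]
        exact famPerm_mmp n k hk
  refine ⟨?_, hiff⟩
  -- counting
  have hFk : ∀ j : Fin n, (j : ℕ) ≠ 0 → (j : ℕ) - 1 ≤ n - 2 := by
    intro j hj; have := j.isLt; omega
  set G : Fin n → {σ : Equiv.Perm (Fin n) // avoids132 σ ∧ mmp 1 0 0 1 σ = 0} :=
    fun j => if h : (j : ℕ) = 0 then ⟨1, one_avoids n, one_mmp n⟩
      else ⟨famPerm n ((j : ℕ) - 1), famPerm_avoids n _ (hFk j h), famPerm_mmp n _ (hFk j h)⟩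
    with hG
  have hGbij : Function.Bijective G := by
    constructor
    · intro a b hab
      have ha := a.isLt; have hb := b.isLt
      by_cases h1 : (a : ℕ) = 0 <;> by_cases h2 : (b : ℕ) = 0
      · exact Fin.ext (h1.trans h2.symm)
      · exfalso
        rw [hG] at hab
        simp only [dif_pos h1, dif_neg h2] at hab
        have := congrArg (fun s => ((s.1 ⟨0, hn⟩ : Fin n) : ℕ)) hab
        simp only [Equiv.Perm.one_apply, famPerm_apply] at this
        simp at this
        omega
      · exfalso
        rw [hG] at hab
        simp only [dif_neg h1, dif_pos h2] at hab
        have := congrArg (fun s => ((s.1 ⟨0, hn⟩ : Fin n) : ℕ)) hab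
        simp only [Equiv.Perm.one_apply, famPerm_apply] at this
        simp at this
        omega
      · rw [hG] at hab
        simp only [dif_neg h1, dif_neg h2] at hab
        have hab' : famPerm n ((a : ℕ) - 1) = famPerm n ((b : ℕ) - 1) :=
          congrArg Subtype.val hab
        have e1 := congrArg (fun π : Equiv.Perm (Fin n) => ((π a : Fin n) : ℕ)) hab'
        have e2 := congrArg (fun π : Equiv.Perm (Fin n) => ((π b : Fin n) : ℕ)) hab'
        simp only [famPerm_apply] at e1 e2
        apply Fin.ext
        split_ifs at e1 e2 <;> omega
    · rintro ⟨σ, hav, h0⟩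
      rcases forward σ hav h0 with rfl | ⟨k, hk, hfam⟩
      · refine ⟨⟨0, hn⟩, ?_⟩
        rw [hG]
        simp
      · by_cases hkn : k + 2 ≤ n
        · refine ⟨⟨k + 1, by omega⟩, ?_⟩
          rw [hG]
          have : ((⟨k + 1, by omega⟩ : Fin n) : ℕ) ≠ 0 := by simp
          simp only [dif_neg this]
          apply Subtype.ext
          simp only
          rw [fam_eq k σ hfam]
          norm_num
        · -- then n = 1 and σ = 1
          have hn1 : n = 1 := by omega
          refine ⟨⟨0, hn⟩, ?_⟩
          rw [hG]
          simp only [dif_pos]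
          apply Subtype.ext
          simp only
          symm
          apply Equiv.ext
          intro i
          apply Fin.ext
          have := hfam i
          have hi := i.isLt
          simp only [Equiv.Perm.one_apply]
          rw [this]
          split <;> omega
  have := Nat.card_eq_of_bijective G hGbij
  rw [Nat.card_eq_fintype_card, Fintype.card_fin] at this
  exact this.symm
end

section
/- For n ≥ 3, the number of 132-avoiding permutations of length n with exactly one match of MMP(1,0,0,1) equals (n-1)(n-2). -/
open Finset

/-!
In a permutation, a position that does not match MMP(1,0,0,1) is a right-to-left maximum (larger
than every later entry) or a right-to-left minimum (smaller than every later entry), and in a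
132-avoiding permutation everything after a right-to-left minimum increases. So if `P` is the only
match, every entry before `P` exceeds everything after it, and after `P` comes either one increasing
run, or a block of right-to-left maxima followed by an increasing run. Either way, whether two
positions are in increasing order depends only on two parameters `p ≠ q` below `n - 1`, and each
such pair is realised by exactly one permutation, because a permutation is determined by which
pairs of positions it keeps in order.
-/

theorem Equiv.Perm.eq_of_lt_iff_lt {α : Type*} [LinearOrder α] [WellFoundedLT α]
    {σ τ : Equiv.Perm α} (h : ∀ i j, i < j → (σ i < σ j ↔ τ i < τ j)) : σ = τ := by
  have hmono : StrictMono (τ ∘ σ.symm) := by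
    intro a b hab
    obtain ⟨i, rfl⟩ := σ.surjective a
    obtain ⟨j, rfl⟩ := σ.surjective b
    simp only [Function.comp_apply, Equiv.symm_apply_apply]
    rcases lt_trichotomy i j with hij | rfl | hji
    · exact (h i j hij).1 hab
    · exact absurd hab (lt_irrefl _)
    · exact (not_lt.1 fun h' => hab.not_gt ((h j i hji).2 h')).lt_of_ne (τ.injective.ne hji.ne')
  have hid : τ ∘ σ.symm = id :=
    (hmono.range_inj strictMono_id).1 (by
      rw [(τ.surjective.comp σ.symm.surjective).range_eq, Set.range_id])
  ext i
  simpa using (congrFun hid (σ i)).symm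

namespace Avoids132

section Shapes

variable {n p q : ℕ}

def shapeRel (p q i j : ℕ) : Prop :=
  p < i ∨ (p < q ∧ i = p ∧ q < j) ∨ (q < p ∧ i = q ∧ j = q + 1)

/-- On `0, 1, …, n-1`, for `p < q` this is
`n-1, n-2, …, n-p, q-p, 0, 1, …, q-p-1, q-p+1, …, n-p-1`, and for `q < p` it is
`n-1, …, n-q, n-q-2, n-q-1, n-q-3, …, n-p-1, 0, 1, …, n-p-2`. -/
def shapeFun (n p q i : ℕ) : ℕ :=
  if p < q then
    if i < p then n - 1 - i
    else if i = p then q - p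
    else if i ≤ q then i - p - 1
    else i - p
  else
    if i = q then n - q - 2
    else if i = q + 1 then n - q - 1
    else if i ≤ p then n - 1 - i
    else i - p - 1

lemma shapeFun_lt (hq : q < n - 1) {i : ℕ} (hi : i < n) : shapeFun n p q i < n := by
  unfold shapeFun; split_ifs <;> omega

lemma shapeFun_injOn (hq : q < n - 1) (hpq : p ≠ q) :
    Set.InjOn (shapeFun n p q) (Set.Iio n) := by
  intro i hi j hj h
  simp only [Set.mem_Iio] at hi hj
  unfold shapeFun at h; split_ifs at h <;> omega

lemma shapeFun_lt_shapeFun_iff (hq : q < n - 1) (hpq : p ≠ q) {i j : ℕ} (hij : i < j)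
    (hj : j < n) :
    shapeFun n p q i < shapeFun n p q j ↔ shapeRel p q i j := by
  unfold shapeFun shapeRel; split_ifs <;> omega

lemma eq_of_shapeRel_iff {p' q' : ℕ} (hp : p < n - 1) (hq : q < n - 1) (hpq : p ≠ q)
    (hp' : p' < n - 1) (hq' : q' < n - 1) (hpq' : p' ≠ q')
    (h : ∀ i j, i < j → j < n → (shapeRel p q i j ↔ shapeRel p' q' i j)) :
    p = p' ∧ q = q' := by
  unfold shapeRel at h
  rcases hpq.lt_or_gt with hlt | hlt <;> rcases hpq'.lt_or_gt with hlt' | hlt'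
  · have h1 := h p (n - 1) (by omega) (by omega)
    have h2 := h p' (n - 1) (by omega) (by omega)
    obtain rfl : p = p' := by omega
    have h3 := h p (max q q') (by omega) (by omega)
    omega
  · have h1 := h p (p + 1) (by omega) (by omega)
    have h2 := h q' (q' + 1) (by omega) (by omega)
    have h3 := h p (n - 1) (by omega) (by omega)
    omega
  · have h1 := h p' (p' + 1) (by omega) (by omega)
    have h2 := h q (q + 1) (by omega) (by omega)
    have h3 := h p' (n - 1) (by omega) (by omega)
    omega
  · have h1 := h q (q + 1) (by omega) (by omega)
    have h2 := h q' (q' + 1) (by omega) (by omega)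
    obtain rfl : q = q' := by omega
    have h3 := h (max p p') (max p p' + 1) (by omega) (by omega)
    omega

end Shapes

variable {n : ℕ}

def IsRightMax (σ : Equiv.Perm (Fin n)) (i : Fin n) : Prop := ∀ j, i < j → σ j < σ i

def IsRightMin (σ : Equiv.Perm (Fin n)) (i : Fin n) : Prop := ∀ j, i < j → σ i < σ j

variable {σ : Equiv.Perm (Fin n)} {i j k : Fin n} {p q : ℕ}

lemma not_isRightMax_iff : ¬IsRightMax σ i ↔ ∃ j, i < j ∧ σ i < σ j := by
  simp only [IsRightMax, not_forall, exists_prop, not_lt]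
  exact exists_congr fun j => and_congr_right fun hij =>
    ⟨fun h => h.lt_of_ne (σ.injective.ne hij.ne), le_of_lt⟩

lemma not_isRightMin_iff : ¬IsRightMin σ i ↔ ∃ j, i < j ∧ σ j < σ i := by
  simp only [IsRightMin, not_forall, exists_prop, not_lt]
  exact exists_congr fun j => and_congr_right fun hij =>
    ⟨fun h => h.lt_of_ne (σ.injective.ne hij.ne'), le_of_lt⟩

lemma mmpMatch_iff : mmpMatch 1 0 0 1 σ i ↔ ¬IsRightMax σ i ∧ ¬IsRightMin σ i := by
  simp [mmpMatch, Nat.one_le_iff_ne_zero, not_isRightMax_iff, not_isRightMin_iff]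

lemma mmp_eq_one_iff {a b c d : ℕ} : mmp a b c d σ = 1 ↔ ∃! i, mmpMatch a b c d σ i := by
  classical
  simp only [mmp, Nat.card_eq_fintype_card, Fintype.card_subtype,
    Fintype.existsUnique_iff_card_one]

lemma IsRightMin.lt_of_lt (h132 : avoids132 σ) (hi : IsRightMin σ i) (hij : i < j)
    (hjk : j < k) : σ j < σ k := by
  by_contra hc
  exact h132 ⟨i, j, k, hij, hjk, hi k (hij.trans hjk),
    (not_lt.1 hc).lt_of_ne (σ.injective.ne hjk.ne')⟩

lemma IsRightMin.mono (h132 : avoids132 σ) (hi : IsRightMin σ i) (hij : i ≤ j) :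
    IsRightMin σ j := by
  rcases hij.eq_or_lt with rfl | hij
  · exact hi
  · exact fun k hjk => hi.lt_of_lt h132 hij hjk

def IsShape (σ : Equiv.Perm (Fin n)) (p q : ℕ) : Prop :=
  ∀ i j : Fin n, i < j → (σ i < σ j ↔ shapeRel p q i j)

lemma existsUnique_isShape (hq : q < n - 1) (hpq : p ≠ q) :
    ∃! σ : Equiv.Perm (Fin n), IsShape σ p q := by
  let f : Fin n → Fin n := fun i => ⟨shapeFun n p q i, shapeFun_lt hq i.isLt⟩
  have hf : Function.Injective f := fun i j hij =>
    Fin.ext (shapeFun_injOn hq hpq i.isLt j.isLt (congrArg Fin.val hij))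
  refine ⟨Equiv.ofBijective f (Finite.injective_iff_bijective.1 hf),
    fun i j hij => shapeFun_lt_shapeFun_iff hq hpq hij j.isLt, fun τ hτ => ?_⟩
  exact Equiv.Perm.eq_of_lt_iff_lt fun i j hij =>
    (hτ i j hij).trans (shapeFun_lt_shapeFun_iff hq hpq hij j.isLt).symm

lemma IsShape.params_eq {p' q' : ℕ} (h : IsShape σ p q) (h' : IsShape σ p' q')
    (hp : p < n - 1) (hq : q < n - 1) (hpq : p ≠ q)
    (hp' : p' < n - 1) (hq' : q' < n - 1) (hpq' : p' ≠ q') : p = p' ∧ q = q' :=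
  eq_of_shapeRel_iff hp hq hpq hp' hq' hpq' fun i j hij hj =>
    (h ⟨i, hij.trans hj⟩ ⟨j, hj⟩ hij).symm.trans (h' ⟨i, hij.trans hj⟩ ⟨j, hj⟩ hij)

lemma IsShape.avoids132 (h : IsShape σ p q) : avoids132 σ := by
  rintro ⟨i, j, k, hij, hjk, hik, hkj⟩
  have h1 := (h i k (hij.trans hjk)).1 hik
  have h2 := mt (h j k hjk).2 hkj.not_gt
  rw [Fin.lt_def] at hij hjk
  unfold shapeRel at h1 h2; omega

lemma IsShape.mmpMatch_iff (h : IsShape σ p q) (hp : p < n - 1) (hq : q < n - 1)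
    (hpq : p ≠ q) : mmpMatch 1 0 0 1 σ i ↔ i.val = min p q := by
  rw [Avoids132.mmpMatch_iff]
  constructor
  · rintro ⟨hmax, hmin⟩
    obtain ⟨j, hij, hj⟩ := not_isRightMax_iff.1 hmax
    obtain ⟨k, hik, hk⟩ := not_isRightMin_iff.1 hmin
    have h1 := (h i j hij).1 hj
    have h2 := mt (h i k hik).2 hk.not_gt
    unfold shapeRel at h1 h2; omega
  · intro hi
    have hlt_q : i < ⟨q + 1, by omega⟩ := by rw [Fin.lt_def]; dsimp only; omega
    have hlt_p : i < ⟨p + 1, by omega⟩ := by rw [Fin.lt_def]; dsimp only; omega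
    refine ⟨fun hmax => (hmax _ hlt_q).not_gt ((h _ _ hlt_q).2 ?_), fun hmin => ?_⟩
    · dsimp only [shapeRel]; omega
    · have := (h _ _ hlt_p).1 (hmin _ hlt_p)
      dsimp only [shapeRel] at this; omega

lemma IsShape.mmp_eq_one (h : IsShape σ p q) (hp : p < n - 1) (hq : q < n - 1)
    (hpq : p ≠ q) : mmp 1 0 0 1 σ = 1 :=
  mmp_eq_one_iff.2 ⟨⟨min p q, by omega⟩, (h.mmpMatch_iff hp hq hpq).2 rfl,
    fun _ hi => Fin.ext ((h.mmpMatch_iff hp hq hpq).1 hi)⟩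

lemma isRightMax_of_lt {P : Fin n} (h132 : avoids132 σ) (hPmin : ¬IsRightMin σ P)
    (hU : ∀ i, i ≠ P → IsRightMax σ i ∨ IsRightMin σ i) (hi : i < P) : IsRightMax σ i :=
  (hU i hi.ne).resolve_right fun h => hPmin (h.mono h132 hi.le)

lemma exists_isShape_of_strictMonoOn {P : Fin n} (h132 : avoids132 σ)
    (hPmax : ¬IsRightMax σ P) (hPmin : ¬IsRightMin σ P)
    (hU : ∀ i, i ≠ P → IsRightMax σ i ∨ IsRightMin σ i)
    (hmono : StrictMonoOn σ (Set.Ioi P)) :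
    ∃ p q, p < n - 1 ∧ q < n - 1 ∧ p ≠ q ∧ IsShape σ p q := by
  classical
  obtain ⟨A, hPA, hA⟩ := not_isRightMax_iff.1 hPmax
  obtain ⟨B, hPB, hB⟩ := not_isRightMin_iff.1 hPmin
  set F := univ.filter fun j => P < j ∧ σ j < σ P
  have hF : F.Nonempty := ⟨B, by simp [F, hPB, hB]⟩
  set Q := F.max' hF
  have hQ : P < Q ∧ σ Q < σ P := by simpa [F] using F.max'_mem hF
  have hlt_of_le : ∀ j, P < j → j ≤ Q → σ j < σ P := fun j hj hjQ =>
    (hmono.monotoneOn hj hQ.1 hjQ).trans_lt hQ.2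
  have hgt_of_lt : ∀ j, Q < j → σ P < σ j := fun j hQj => by
    have hjF : j ∉ F := fun hjF => (F.le_max' j hjF).not_gt hQj
    simp only [F, mem_filter, mem_univ, true_and, not_and, not_lt] at hjF
    exact (hjF (hQ.1.trans hQj)).lt_of_ne (σ.injective.ne (hQ.1.trans hQj).ne)
  have hQA : Q < A := lt_of_not_ge fun h => (hlt_of_le A hPA h).not_gt hA
  have hAn := A.isLt
  rw [Fin.lt_def] at hQ hQA
  refine ⟨P, Q, by omega, by omega, by omega, fun i j hij => ?_⟩
  rcases lt_trichotomy i P with hi | rfl | hi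
  · refine iff_of_false (isRightMax_of_lt h132 hPmin hU hi j hij).not_gt ?_
    rw [Fin.lt_def] at hi
    unfold shapeRel; omega
  · constructor
    · intro h
      have hQj : Q < j := lt_of_not_ge fun hjQ => (hlt_of_le j hij hjQ).not_gt h
      rw [Fin.lt_def] at hQj
      unfold shapeRel; omega
    · intro h
      refine hgt_of_lt j ?_
      rw [Fin.lt_def] at hij ⊢
      unfold shapeRel at h; omega
  · exact iff_of_true (hmono hi (hi.trans hij) hij) (Or.inl hi)

lemma exists_isRightMax_block {P : Fin n} (h132 : avoids132 σ)
    (hU : ∀ i, i ≠ P → IsRightMax σ i ∨ IsRightMin σ i)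
    (hmono : ¬StrictMonoOn σ (Set.Ioi P)) :
    ∃ R : Fin n, P < R ∧ R.val < n - 1 ∧ (∀ i, P < i → i ≤ R → IsRightMax σ i) ∧
      ∀ i, R < i → IsRightMin σ i := by
  classical
  obtain ⟨j, hPj, k, -, hjk, hσjk⟩ :
      ∃ j, P < j ∧ ∃ k, P < k ∧ j < k ∧ ¬σ j < σ k := by
    simpa [StrictMonoOn] using hmono
  set G := univ.filter fun i => ¬IsRightMin σ i
  have hjG : j ∈ G := by simpa [G] using fun h => hσjk (h k hjk)
  set R := G.max' ⟨j, hjG⟩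
  have hR : ¬IsRightMin σ R := by simpa [G] using G.max'_mem ⟨j, hjG⟩
  refine ⟨R, hPj.trans_le (G.le_max' j hjG), ?_, fun i hPi hiR => ?_, fun i hRi => ?_⟩
  · by_contra hc
    exact hR fun i hi => absurd i.isLt (by rw [Fin.lt_def] at hi; omega)
  · exact (hU i hPi.ne').resolve_right fun h => hR (h.mono h132 hiR)
  · simpa [G] using fun hiG => (G.le_max' i hiG).not_gt hRi

lemma exists_isShape_of_not_strictMonoOn {P : Fin n} (h132 : avoids132 σ)
    (hPmax : ¬IsRightMax σ P) (hPmin : ¬IsRightMin σ P)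
    (hU : ∀ i, i ≠ P → IsRightMax σ i ∨ IsRightMin σ i)
    (hmono : ¬StrictMonoOn σ (Set.Ioi P)) :
    ∃ p q, p < n - 1 ∧ q < n - 1 ∧ p ≠ q ∧ IsShape σ p q := by
  obtain ⟨A, hPA, hA⟩ := not_isRightMax_iff.1 hPmax
  obtain ⟨R, hPR, hRn, hmid, hgtR⟩ := exists_isRightMax_block h132 hU hmono
  set S : Fin n := ⟨P + 1, by rw [Fin.lt_def] at hPR; omega⟩
  have hPS : P < S := by simp [S, Fin.lt_def]
  have hSle : ∀ i, P < i → S ≤ i := fun i hi => by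
    rw [Fin.lt_def] at hi; simp [S, Fin.le_def]; omega
  have hSR : S ≤ R := hSle R hPR
  have hσPS : σ P < σ S := by
    by_contra hc
    have hSP : σ S < σ P := (not_lt.1 hc).lt_of_ne (σ.injective.ne hPS.ne')
    rcases (hSle A hPA).eq_or_lt with hSA | hSA
    · exact hc (hSA ▸ hA)
    · exact (hmid S hPS hSR A hSA).not_gt (hSP.trans hA)
  have hσgtS : ∀ i, S < i → σ i < σ P := fun i hSi => by
    by_contra hc
    exact h132 ⟨P, S, i, hPS, hSi, (not_lt.1 hc).lt_of_ne (σ.injective.ne (hPS.trans hSi).ne),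
      hmid S hPS hSR i hSi⟩
  rw [Fin.lt_def] at hPR
  refine ⟨R, P, by omega, by omega, by omega, fun i j hij => ?_⟩
  rcases lt_trichotomy i P with hi | rfl | hPi
  · refine iff_of_false (isRightMax_of_lt h132 hPmin hU hi j hij).not_gt ?_
    rw [Fin.lt_def] at hi
    unfold shapeRel; omega
  · rcases (hSle j hij).eq_or_lt with hSj | hSj
    · subst hSj
      exact iff_of_true hσPS (by unfold shapeRel; simp [S]; omega)
    · refine iff_of_false (hσgtS j hSj).not_gt ?_
      rw [Fin.lt_def] at hSj
      unfold shapeRel; simp [S] at hSj ⊢; omega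
  · rcases le_or_gt i R with hiR | hRi
    · refine iff_of_false (hmid i hPi hiR j hij).not_gt ?_
      rw [Fin.lt_def] at hPi; rw [Fin.le_def] at hiR
      unfold shapeRel; omega
    · exact iff_of_true (hgtR i hRi j hij) (Or.inl hRi)

theorem avoids132_and_mmp_eq_one_iff : avoids132 σ ∧ mmp 1 0 0 1 σ = 1 ↔
    ∃ p q, p < n - 1 ∧ q < n - 1 ∧ p ≠ q ∧ IsShape σ p q := by
  constructor
  · rintro ⟨h132, hmmp⟩
    obtain ⟨P, hPmatch, hP⟩ := mmp_eq_one_iff.1 hmmp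
    obtain ⟨hPmax, hPmin⟩ := mmpMatch_iff.1 hPmatch
    have hU : ∀ i, i ≠ P → IsRightMax σ i ∨ IsRightMin σ i := fun i hi => by
      by_contra hc
      exact hi (hP i (mmpMatch_iff.2 (not_or.1 hc)))
    by_cases hmono : StrictMonoOn σ (Set.Ioi P)
    · exact exists_isShape_of_strictMonoOn h132 hPmax hPmin hU hmono
    · exact exists_isShape_of_not_strictMonoOn h132 hPmax hPmin hU hmono
  · rintro ⟨p, q, hp, hq, hpq, h⟩
    exact ⟨h.avoids132, h.mmp_eq_one hp hq hpq⟩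

end Avoids132

open Avoids132 in
theorem stmt15_general (n : ℕ) :
    Nat.card {σ : Equiv.Perm (Fin n) // avoids132 σ ∧ mmp 1 0 0 1 σ = 1} =
      (n - 1) * (n - 2) := by
  classical
  set S := (range (n - 1)).offDiag
  let shapes : ℕ × ℕ → Finset (Equiv.Perm (Fin n)) := fun pq => {σ | IsShape σ pq.1 pq.2}
  have hset : ({σ | avoids132 σ ∧ mmp 1 0 0 1 σ = 1} : Finset (Equiv.Perm (Fin n))) =
      S.biUnion shapes := by
    ext σ
    simp [S, shapes, avoids132_and_mmp_eq_one_iff, and_assoc]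
  have hdisj : (S : Set (ℕ × ℕ)).PairwiseDisjoint shapes := by
    intro a ha b hb hab
    simp only [S, coe_offDiag, Set.mem_offDiag, coe_range, Set.mem_Iio] at ha hb
    refine disjoint_filter.2 fun σ _ h h' => hab ?_
    obtain ⟨h1, h2⟩ := IsShape.params_eq h h' ha.1 ha.2.1 ha.2.2 hb.1 hb.2.1 hb.2.2
    exact Prod.ext h1 h2
  have hone : ∀ pq ∈ S, (shapes pq).card = 1 := fun pq hpq => by
    simp only [S, mem_offDiag, mem_range] at hpq
    exact (Fintype.existsUnique_iff_card_one _).1 (existsUnique_isShape hpq.2.1 hpq.2.2)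
  rw [Nat.card_eq_fintype_card, Fintype.card_subtype, hset, card_biUnion hdisj,
    sum_congr rfl hone, sum_const, smul_eq_mul, mul_one, offDiag_card, card_range,
    ← Nat.mul_sub_one, Nat.sub_sub]

theorem stmt15 (n : ℕ) (hn : 3 ≤ n) :
    Nat.card {σ : Equiv.Perm (Fin n) // avoids132 σ ∧ mmp 1 0 0 1 σ = 1} =
      (n - 1) * (n - 2) :=
  stmt15_general n
end

section
/- For n ≥ 3, the number of 132-avoiding permutations of length n with exactly n-3 matches of MMP(1,0,0,1) equals 3·C_{n-2}, where C_m is the m-th Catalan number. -/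
/-
Every entry of a permutation is a match of MMP(1,0,0,1), a right-to-left maximum or a
right-to-left minimum, and only the last entry is two of these. So σ ∈ S_n has n - 3 matches
exactly when it has four right-to-left extrema. A 132-avoider with four right-to-left extrema,
minimum m and maximum M, is one of L B m x M, L M B m x, L M B x m with B < x < L, and deleting
m and M turns it into the 132-avoider L B x. Conversely, 132-avoidance forces every 132-avoider
τ of the remaining values to split as L B x in this way, so τ has exactly three preimages. The
count is therefore 3 |S_{n-2}(132)| = 3 C_{n-2}, the Catalan count coming from the decomposition
σ = L n R with L > R.
-/

open Finset

open List

namespace List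

section Records

variable {α : Type*} (r : α → α → Prop) [DecidableRel r]

/-- The number of entries `x` such that `r y x` for every later entry `y`: the right-to-left
maxima for `r = (· < ·)` and the right-to-left minima for `r = (· > ·)`. -/
def rlRecordCount : List α → ℕ
  | [] => 0
  | x :: s => rlRecordCount s + if ∀ y ∈ s, r y x then 1 else 0

@[simp]
theorem rlRecordCount_nil : rlRecordCount r [] = 0 := rfl

theorem rlRecordCount_cons (x : α) (s : List α) :
    rlRecordCount r (x :: s) = rlRecordCount r s + if ∀ y ∈ s, r y x then 1 else 0 := rfl

@[simp]
theorem rlRecordCount_singleton (x : α) : rlRecordCount r [x] = 1 := by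
  simp [rlRecordCount_cons]

variable {r}

theorem rlRecordCount_append_of_forall_exists {A B : List α}
    (h : ∀ x ∈ A, ∃ y ∈ B, ¬ r y x) : rlRecordCount r (A ++ B) = rlRecordCount r B := by
  induction A with
  | nil => rfl
  | cons a A ih =>
    obtain ⟨y, hy, hya⟩ := h a mem_cons_self
    have hrec : ¬ ∀ z ∈ A ++ B, r z a := fun hall => hya (hall y (mem_append_right A hy))
    rw [cons_append, rlRecordCount_cons, if_neg hrec, ih fun x hx => h x (mem_cons_of_mem a hx)]
    rfl

theorem rlRecordCount_append_of_forall_forall {A B : List α}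
    (h : ∀ x ∈ A, ∀ y ∈ B, r y x) :
    rlRecordCount r (A ++ B) = rlRecordCount r A + rlRecordCount r B := by
  induction A with
  | nil => simp
  | cons a A ih =>
    have hrec : (∀ z ∈ A ++ B, r z a) ↔ ∀ z ∈ A, r z a :=
      ⟨fun hall z hz => hall z (mem_append_left B hz), fun hall z hz =>
        (mem_append.mp hz).elim (hall z) (h a mem_cons_self z)⟩
    rw [cons_append, rlRecordCount_cons, rlRecordCount_cons, if_congr hrec rfl rfl,
      ih fun x hx => h x (mem_cons_of_mem a hx)]
    omega

theorem rlRecordCount_pos {l : List α} (hl : l ≠ []) : 0 < rlRecordCount r l := by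
  induction l with
  | nil => contradiction
  | cons x s ih =>
    rcases eq_or_ne s [] with rfl | hs
    · simp
    · have := ih hs
      rw [rlRecordCount_cons]
      omega

theorem rlRecordCount_of_pairwise {l : List α} (hl : l.Pairwise fun x y => r y x) :
    rlRecordCount r l = l.length := by
  induction l with
  | nil => rfl
  | cons x s ih =>
    rw [pairwise_cons] at hl
    rw [rlRecordCount_cons, if_pos hl.1, ih hl.2, length_cons]

end Records

theorem exists_eq_concat_of_rlRecordCount_lt_eq_one {l : List ℕ} (hnd : l.Nodup)
    (h : rlRecordCount (· < ·) l = 1) : ∃ B x, l = B ++ [x] ∧ ∀ v ∈ B, v < x := by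
  induction l with
  | nil => simp at h
  | cons y s ih =>
    rcases eq_or_ne s [] with rfl | hs
    · exact ⟨[], y, rfl, by simp⟩
    have hpos := rlRecordCount_pos (r := (· < ·)) hs
    rw [rlRecordCount_cons] at h
    have hy : ¬ ∀ v ∈ s, v < y := fun hall => by rw [if_pos hall] at h; omega
    rw [if_neg hy] at h
    obtain ⟨B, x, rfl, hB⟩ := ih (nodup_cons.mp hnd).2 h
    have hyx : y ≠ x := fun e => (nodup_cons.mp hnd).1 (by simp [e])
    have hlt : y < x := by
      by_contra hge
      exact hy fun v hv => by
        rcases mem_append.mp hv with hv | hv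
        · have := hB v hv; omega
        · simp at hv; omega
    exact ⟨y :: B, x, rfl, by simpa using ⟨hlt, hB⟩⟩

theorem rlRecordCount_lt_append_cons_of_forall_lt {L R : List ℕ} {M : ℕ}
    (hM : ∀ v ∈ L ++ R, v < M) :
    rlRecordCount (· < ·) (L ++ M :: R) = rlRecordCount (· < ·) R + 1 := by
  rw [rlRecordCount_append_of_forall_exists fun v hv =>
      ⟨M, mem_cons_self, not_lt.mpr (hM v (mem_append_left R hv)).le⟩,
    rlRecordCount_cons, if_pos fun y hy => hM y (mem_append_right L hy)]

def mmp1001Count : List ℕ → ℕ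
  | [] => 0
  | x :: s => mmp1001Count s + if (∃ y ∈ s, x < y) ∧ ∃ y ∈ s, y < x then 1 else 0

theorem mmp1001Count_add_rlRecordCount {l : List ℕ} (hl : l ≠ []) (hnd : l.Nodup) :
    mmp1001Count l + rlRecordCount (· < ·) l + rlRecordCount (· > ·) l = l.length + 1 := by
  induction l with
  | nil => contradiction
  | cons x s ih =>
    rcases eq_or_ne s [] with rfl | hs
    · simp [mmp1001Count]
    have hx : x ∉ s := (nodup_cons.mp hnd).1
    obtain ⟨y₀, hy₀⟩ := exists_mem_of_ne_nil s hs
    have := ih hs (nodup_cons.mp hnd).2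
    simp only [mmp1001Count, rlRecordCount_cons, length_cons]
    by_cases hup : ∃ y ∈ s, x < y <;> by_cases hdown : ∃ y ∈ s, y < x <;> grind

theorem triple_sublist_append {α : Type*} {a b c : α} {A B : List α} (h : [a, b, c] <+ A ++ B) :
    [a, b, c] <+ A ∨ ([a, b] <+ A ∧ c ∈ B) ∨ (a ∈ A ∧ [b, c] <+ B) ∨ [a, b, c] <+ B := by
  obtain ⟨u, v, huv, hu, hv⟩ := sublist_append_iff.mp h
  rcases u with _ | ⟨_, _ | ⟨_, _ | ⟨_, _ | ⟨_, _⟩⟩⟩⟩ <;> simp at huv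
  · exact .inr (.inr (.inr (huv ▸ hv)))
  · obtain ⟨rfl, rfl⟩ := huv
    exact .inr (.inr (.inl ⟨hu.subset mem_cons_self, hv⟩))
  · obtain ⟨rfl, rfl, rfl⟩ := huv
    exact .inr (.inl ⟨hu, hv.subset mem_cons_self⟩)
  · obtain ⟨rfl, rfl, rfl, rfl⟩ := huv
    exact .inl hu

end List

def Avoids132 (l : List ℕ) : Prop := ∀ a b c, [a, b, c] <+ l → ¬ (a < c ∧ c < b)

namespace Avoids132

variable {l l' P Q A : List ℕ} {m x : ℕ}

theorem sublist (h : Avoids132 l) (hs : l' <+ l) : Avoids132 l' :=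
  fun a b c habc => h a b c (habc.trans hs)

theorem pairwise_of_min (h : Avoids132 (P ++ m :: Q)) (hQ : Q.Nodup) (hm : ∀ v ∈ Q, m < v) :
    Q.Pairwise (· < ·) := by
  refine pairwise_iff_forall_sublist.mpr fun {b c} hbc => ?_
  have hne : b ≠ c := by simpa using hbc.nodup hQ
  have hsub : [m, b, c] <+ P ++ m :: Q :=
    (cons_sublist_cons.mpr hbc).trans (sublist_append_right _ _)
  have := hm c (hbc.subset (by simp))
  by_contra hcb
  exact h m b c hsub ⟨this, by omega⟩

theorem append_min_cons (h : Avoids132 (P ++ Q)) (hQ : Q.Pairwise (· < ·))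
    (hm : ∀ v ∈ P ++ Q, m < v) : Avoids132 (P ++ m :: Q) := by
  have hlt : ∀ {b c}, [b, c] <+ Q → b < c := fun hbc => by
    simpa using hQ.sublist hbc
  rintro a b c habc ⟨hac, hcb⟩
  rcases triple_sublist_append habc with h' | ⟨hab, hc⟩ | ⟨ha, hbc⟩ | h'
  · exact h a b c (h'.trans (sublist_append_left _ _)) ⟨hac, hcb⟩
  · rcases mem_cons.mp hc with rfl | hc
    · have := hm a (mem_append_left Q (hab.subset mem_cons_self))
      omega
    · exact h a b c (hab.append (singleton_sublist.mpr hc)) ⟨hac, hcb⟩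
  · rcases sublist_cons_iff.mp hbc with hbc | ⟨r, hr, hrQ⟩
    · have := hlt hbc
      omega
    · obtain ⟨rfl, rfl⟩ := cons_eq_cons.mp hr
      have := hm c (mem_append_right P (hrQ.subset (by simp)))
      omega
  · have := hlt h'.tail
    omega

theorem exists_split_of_concat (h : Avoids132 (A ++ [x])) (hx : x ∉ A) :
    ∃ L B, A = L ++ B ∧ (∀ v ∈ L, x < v) ∧ ∀ v ∈ B, v < x := by
  induction A with
  | nil => exact ⟨[], [], rfl, by simp, by simp⟩
  | cons y A ih =>
    have hyx : y ≠ x := fun e => hx (e ▸ mem_cons_self)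
    rcases Nat.lt_or_gt_of_ne hyx with hyx | hxy
    · refine ⟨[], y :: A, rfl, by simp, fun v hv => ?_⟩
      rcases mem_cons.mp hv with rfl | hv
      · exact hyx
      have hvx : v ≠ x := fun e => hx (e ▸ mem_cons_of_mem y hv)
      have hsub : [y, v, x] <+ y :: A ++ [x] :=
        cons_sublist_cons.mpr ((singleton_sublist.mpr hv).append (Sublist.refl [x]))
      by_contra hxv
      exact h y v x hsub ⟨hyx, by omega⟩
    · obtain ⟨L, B, rfl, hL, hB⟩ :=
        ih (h.sublist (sublist_cons_self y _)) fun e => hx (mem_cons_of_mem y e)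
      exact ⟨y :: L, B, rfl, by simpa using ⟨hxy, hL⟩, hB⟩

end Avoids132

theorem avoids132_nil : Avoids132 [] := by
  intro a b c h
  simp at h

theorem avoids132_append_cons_iff {L R : List ℕ} {M : ℕ} (hM : ∀ v ∈ L ++ R, v < M) :
    Avoids132 (L ++ M :: R) ↔ Avoids132 L ∧ Avoids132 R ∧ ∀ x ∈ L, ∀ y ∈ R, y ≤ x := by
  refine ⟨fun h => ⟨h.sublist (sublist_append_left _ _),
    h.sublist ((sublist_cons_self M R).trans (sublist_append_right _ _)), fun x hx y hy => ?_⟩, ?_⟩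
  · have hsub : [x, M, y] <+ L ++ M :: R :=
      (singleton_sublist.mpr hx).append (cons_sublist_cons.mpr (singleton_sublist.mpr hy))
    have := hM y (mem_append_right L hy)
    by_contra hxy
    exact h x M y hsub ⟨by omega, this⟩
  · rintro ⟨hL, hR, hcross⟩ a b c habc ⟨hac, hcb⟩
    rcases triple_sublist_append habc with h | ⟨hab, hc⟩ | ⟨ha, hbc⟩ | h
    · exact hL a b c h ⟨hac, hcb⟩
    · rcases mem_cons.mp hc with rfl | hc
      · have := hM b (mem_append_left R (hab.subset (by simp)))
        omega
      · have := hcross a (hab.subset mem_cons_self) c hc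
        omega
    · have := hcross a ha c (hbc.tail.subset (by simp))
      omega
    · rcases sublist_cons_iff.mp h with h | ⟨r, hr, hrR⟩
      · exact hR a b c h ⟨hac, hcb⟩
      · obtain ⟨rfl, rfl⟩ := cons_eq_cons.mp hr
        have := hM c (mem_append_right L (hrR.subset (by simp)))
        omega

theorem List.eq_of_append_eq_append_of_lt {L₁ B₁ L₂ B₂ : List ℕ} {x : ℕ} (h : L₁ ++ B₁ = L₂ ++ B₂)
    (hL₁ : ∀ v ∈ L₁, x < v) (hB₁ : ∀ v ∈ B₁, v < x) (hL₂ : ∀ v ∈ L₂, x < v)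
    (hB₂ : ∀ v ∈ B₂, v < x) : L₁ = L₂ ∧ B₁ = B₂ := by
  have upper : ∀ {L B : List ℕ}, (∀ v ∈ L, x < v) → (∀ v ∈ B, v < x) →
      (L ++ B).filter (x < ·) = L := fun hL hB => by
    rw [filter_append, filter_eq_self.mpr (by simpa using hL),
      filter_eq_nil_iff.mpr (by simpa using fun v hv => (hB v hv).le), append_nil]
  have hL : L₁ = L₂ := by rw [← upper hL₁ hB₁, h, upper hL₂ hB₂]
  exact ⟨hL, append_cancel_left (hL ▸ h)⟩

theorem List.perm_range'_of_append_perm {L R : List ℕ} {a : ℕ}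
    (h : L ++ R ~ range' a (R.length + L.length)) (hLR : ∀ x ∈ L, ∀ y ∈ R, y < x) :
    R ~ range' a R.length ∧ L ~ range' (a + R.length) L.length := by
  have hsorted : R.mergeSort ++ L.mergeSort = range' a (R.length + L.length) := by
    refine Perm.eq_of_pairwise' (r := (· ≤ ·)) ?_ (pairwise_le_range' 1) ?_
    · refine pairwise_append.mpr ⟨pairwise_mergeSort' _ R, pairwise_mergeSort' _ L, ?_⟩
      intro y hy x hx
      exact (hLR x ((mergeSort_perm L _).subset hx) y ((mergeSort_perm R _).subset hy)).le
    · exact ((mergeSort_perm R _).append (mergeSort_perm L _)).trans (perm_append_comm.trans h)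
  rw [← range'_append_1] at hsorted
  obtain ⟨hR, hL⟩ := append_inj hsorted (by simp)
  exact ⟨hR ▸ (mergeSort_perm R _).symm, hL ▸ (mergeSort_perm L _).symm⟩

open scoped Classical in
noncomputable def avoiders (a n : ℕ) : Finset (List ℕ) :=
  (range' a n).permutations.toFinset.filter Avoids132

theorem mem_avoiders {a n : ℕ} {l : List ℕ} :
    l ∈ avoiders a n ↔ l ~ range' a n ∧ Avoids132 l := by
  simp [avoiders, mem_permutations]

theorem avoiders_zero (a : ℕ) : avoiders a 0 = {[]} := by
  ext l
  simp only [mem_avoiders, range'_zero, perm_nil, Finset.mem_singleton, and_iff_left_iff_imp]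
  rintro rfl
  exact avoids132_nil

theorem List.range'_succ_perm (a n : ℕ) : range' a (n + 1) ~ (a + n) :: range' a n := by
  simp [range'_1_concat]

theorem exists_eq_append_cons_of_mem_avoiders_succ {a n : ℕ} {l : List ℕ}
    (hl : l ∈ avoiders a (n + 1)) : ∃ L R, l = L ++ (a + n) :: R ∧ L.length + R.length = n ∧
      L ∈ avoiders (a + R.length) L.length ∧ R ∈ avoiders a R.length := by
  obtain ⟨hperm, hav⟩ := mem_avoiders.mp hl
  obtain ⟨L, R, rfl⟩ := append_of_mem (hperm.mem_iff.mpr (by simp) : a + n ∈ l)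
  have hLR : L ++ R ~ range' a n :=
    (perm_cons _).mp (perm_middle.symm.trans (hperm.trans (range'_succ_perm a n)))
  have hlt : ∀ v ∈ L ++ R, v < a + n := fun v hv => by
    have := hLR.mem_iff.mp hv
    simp only [mem_range'_1] at this
    omega
  obtain ⟨hL, hR, hcross⟩ := (avoids132_append_cons_iff hlt).mp hav
  have hnd := nodup_append.mp (hLR.nodup_iff.mpr nodup_range')
  have hlen : R.length + L.length = n := by simpa [add_comm] using hLR.length_eq
  obtain ⟨hRperm, hLperm⟩ := perm_range'_of_append_perm (hlen ▸ hLR)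
    fun x hx y hy => lt_of_le_of_ne (hcross x hx y hy) (hnd.2.2 x hx y hy).symm
  exact ⟨L, R, rfl, by omega, mem_avoiders.mpr ⟨hLperm, hL⟩, mem_avoiders.mpr ⟨hRperm, hR⟩⟩

theorem append_cons_mem_avoiders {a j k n : ℕ} {L R : List ℕ} (hL : L ∈ avoiders (a + k) j)
    (hR : R ∈ avoiders a k) (hn : j + k = n) : L ++ (a + n) :: R ∈ avoiders a (n + 1) := by
  obtain ⟨hL, hLav⟩ := mem_avoiders.mp hL
  obtain ⟨hR, hRav⟩ := mem_avoiders.mp hR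
  have hmemL : ∀ x ∈ L, a + k ≤ x ∧ x < a + n := fun x hx => by
    have := hL.mem_iff.mp hx
    simp only [mem_range'_1] at this
    omega
  have hmemR : ∀ y ∈ R, y < a + k := fun y hy => by
    simpa using (mem_range'_1.mp (hR.mem_iff.mp hy)).2
  refine mem_avoiders.mpr ⟨perm_middle.trans ((perm_cons _).mpr ?_ |>.trans
    (range'_succ_perm a n).symm), (avoids132_append_cons_iff fun v hv => ?_).mpr
      ⟨hLav, hRav, fun x hx y hy => ?_⟩⟩
  · rw [← hn, add_comm j k, ← range'_append_1]
    exact perm_append_comm.trans (hR.append hL)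
  · rcases mem_append.mp hv with hv | hv
    · exact (hmemL v hv).2
    · have := hmemR v hv
      omega
  · have := hmemR y hy
    have := (hmemL x hx).1
    omega

theorem avoiders_succ (a n : ℕ) :
    avoiders a (n + 1) = ((antidiagonal n).biUnion fun p =>
      avoiders (a + p.2) p.1 ×ˢ avoiders a p.2).image fun q => q.1 ++ (a + n) :: q.2 := by
  ext l
  simp only [Finset.mem_image, Finset.mem_biUnion, Finset.mem_product,
    Finset.HasAntidiagonal.mem_antidiagonal, Prod.exists]
  constructor
  · intro hl
    obtain ⟨L, R, rfl, hlen, hL, hR⟩ := exists_eq_append_cons_of_mem_avoiders_succ hl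
    exact ⟨L, R, ⟨L.length, R.length, hlen, hL, hR⟩, rfl⟩
  · rintro ⟨L, R, ⟨j, k, hn, hL, hR⟩, rfl⟩
    exact append_cons_mem_avoiders hL hR hn

theorem card_avoiders (a n : ℕ) : (avoiders a n).card = catalan n := by
  induction n using Nat.strong_induction_on generalizing a with
  | _ n ih =>
  rcases n with _ | n
  · simp [avoiders_zero]
  have hlen : ∀ {p : ℕ × ℕ} {q : List ℕ × List ℕ},
      q ∈ avoiders (a + p.2) p.1 ×ˢ avoiders a p.2 → q.1.length = p.1 ∧ q.2.length = p.2 := by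
    intro p q hq
    simp only [Finset.mem_product, mem_avoiders] at hq
    exact ⟨by simpa using hq.1.1.length_eq, by simpa using hq.2.1.length_eq⟩
  rw [avoiders_succ, card_image_of_injOn, card_biUnion, catalan_succ']
  · refine sum_congr rfl fun p hp => ?_
    rw [card_product, ih _ (by simp at hp; omega), ih _ (by simp at hp; omega)]
  · intro p _ p' _ hpp'
    refine Finset.disjoint_left.mpr fun q hq hq' => hpp' ?_
    exact Prod.ext ((hlen hq).1.symm.trans (hlen hq').1) ((hlen hq).2.symm.trans (hlen hq').2)
  · rintro ⟨L, R⟩ hq ⟨L', R'⟩ hq' heq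
    simp only [Finset.coe_biUnion, Set.mem_iUnion, Finset.mem_coe, Finset.mem_product,
      mem_avoiders] at hq hq'
    obtain ⟨p, hp, ⟨hL, -⟩, hR, -⟩ := hq
    rw [Finset.HasAntidiagonal.mem_antidiagonal] at hp
    have hL' : a + n ∉ L := fun h => by
      have := hL.mem_iff.mp h
      simp only [mem_range'_1] at this
      omega
    have hR' : a + n ∉ R := fun h => by simpa [← hp] using hR.mem_iff.mp h
    obtain ⟨rfl, -, rfl⟩ := (append_cons_inj_of_notMem hL' hR').mp heq
    rfl

namespace Avoids132

variable {l P Q : List ℕ} {m : ℕ}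

theorem rlRecordCount_gt_append_min_cons (hav : Avoids132 (P ++ m :: Q)) (hnd : (P ++ m :: Q).Nodup)
    (hmin : ∀ v ∈ P ++ m :: Q, m ≤ v) : rlRecordCount (· > ·) (P ++ m :: Q) = Q.length + 1 := by
  have hmP : m ∉ P := fun h => (nodup_append.mp hnd).2.2 m h m mem_cons_self rfl
  have hndQ := (nodup_cons.mp (nodup_append.mp hnd).2.1)
  have hlt : ∀ v ∈ P ++ Q, m < v := fun v hv => by
    have := hmin v (by simp at hv ⊢; tauto)
    have : v ≠ m := by rintro rfl; simp_all
    omega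
  rw [rlRecordCount_append_of_forall_exists fun v hv => ⟨m, mem_cons_self, by
      simpa using (hlt v (mem_append_left Q hv)).le⟩, rlRecordCount_cons,
    if_pos fun v hv => hlt v (mem_append_right P hv),
    rlRecordCount_of_pairwise (hav.pairwise_of_min hndQ.2 fun v hv => hlt v (by simp [hv]))]

theorem exists_of_rlRecordCount_gt_eq_two (hav : Avoids132 l) (hnd : l.Nodup) (hm : m ∈ l)
    (hmin : ∀ v ∈ l, m ≤ v) (h : rlRecordCount (· > ·) l = 2) :
    ∃ L B x, l = L ++ B ++ [m, x] ∧ (∀ v ∈ L, x < v) ∧ ∀ v ∈ B, v < x := by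
  obtain ⟨P, Q, rfl⟩ := append_of_mem hm
  obtain ⟨x, rfl⟩ : ∃ x, Q = [x] := by
    have := hav.rlRecordCount_gt_append_min_cons hnd hmin
    exact length_eq_one_iff.mp (by omega)
  have hx : x ∉ P := fun hx => (nodup_append.mp hnd).2.2 x hx x (by simp) rfl
  obtain ⟨L, B, rfl, hL, hB⟩ := (hav.sublist
    ((Sublist.refl P).append (sublist_cons_self m [x]))).exists_split_of_concat hx
  exact ⟨L, B, x, by simp, hL, hB⟩

theorem exists_of_rlRecordCount_eq_three (hav : Avoids132 l) (hnd : l.Nodup) (hm : m ∈ l)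
    (hmin : ∀ v ∈ l, m ≤ v) (h : rlRecordCount (· < ·) l + rlRecordCount (· > ·) l = 3) :
    ∃ B x, (l = B ++ [m, x] ∨ l = B ++ [x, m]) ∧ ∀ v ∈ B, v < x := by
  obtain ⟨P, Q, rfl⟩ := append_of_mem hm
  have hgt := hav.rlRecordCount_gt_append_min_cons hnd hmin
  have hpos := rlRecordCount_pos (r := (· < ·)) (l := P ++ m :: Q) (by simp)
  rcases Q with _ | ⟨x, _ | ⟨y, Q⟩⟩
  · have hmP : ∀ v ∈ P, ∀ y ∈ [m], y < v := fun v hv y hy => by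
      have := hmin v (by simp [hv])
      have : v ≠ m := fun e => (nodup_append.mp hnd).2.2 v hv m (by simp) e
      simp at hy
      omega
    have hlt : rlRecordCount (· < ·) (P ++ [m]) = rlRecordCount (· < ·) P + 1 := by
      rw [rlRecordCount_append_of_forall_forall hmP, rlRecordCount_singleton]
    obtain ⟨B, x, rfl, hB⟩ := exists_eq_concat_of_rlRecordCount_lt_eq_one
      (nodup_append.mp hnd).1 (by simp only [length_nil] at hgt; omega)
    exact ⟨B, x, .inr (by simp), hB⟩
  · obtain ⟨B, y, hBy, hB⟩ := exists_eq_concat_of_rlRecordCount_lt_eq_one hnd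
      (by simp only [length_singleton] at hgt; omega)
    obtain ⟨rfl, hxy⟩ := append_inj' (by simpa using hBy : (P ++ [m]) ++ [x] = B ++ [y]) rfl
    obtain rfl : x = y := by simpa using hxy
    exact ⟨P, x, .inl rfl, fun v hv => hB v (by simp [hv])⟩
  · simp only [length_cons] at hgt
    omega

end Avoids132

/-- The three ways of inserting a new minimum `m` and maximum `M` into `L ++ B ++ [x]`, for
`B < x < L`, that leave a 132-avoider with four right-to-left extrema. -/
def insertExtremes (m M : ℕ) (L B : List ℕ) (x : ℕ) : Fin 3 → List ℕ
  | 0 => L ++ B ++ [m, x, M]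
  | 1 => L ++ M :: B ++ [m, x]
  | 2 => L ++ M :: B ++ [x, m]

section insertExtremes

variable {m M x : ℕ} {L B : List ℕ}

theorem insertExtremes_perm (i : Fin 3) :
    insertExtremes m M L B x i ~ m :: M :: (L ++ B ++ [x]) := by
  refine perm_iff_count.mpr fun v => ?_
  fin_cases i <;> simp [insertExtremes, count_cons] <;> omega

theorem erase_erase_insertExtremes (hnd : (m :: M :: (L ++ B ++ [x])).Nodup) (i : Fin 3) :
    ((insertExtremes m M L B x i).erase M).erase m = L ++ B ++ [x] := by
  have hm := (nodup_cons.mp hnd).1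
  have hM := (nodup_cons.mp (nodup_cons.mp hnd).2).1
  simp only [List.mem_cons, List.mem_append, not_mem_nil, not_or, not_false_eq_true,
    and_true] at hm hM
  obtain ⟨hmM, ⟨hmL, hmB⟩, hmx⟩ := hm
  obtain ⟨⟨hML, hMB⟩, hMx⟩ := hM
  fin_cases i <;> simp [insertExtremes, erase_append_right, *,
    Ne.symm hmx, Ne.symm hMx]

theorem insertExtremes_injective (hmx : m < x) (hxM : x < M) :
    Function.Injective (insertExtremes m M L B x) := by
  intro i j h
  have := congrArg (fun l => l.reverse.head?) h
  fin_cases i <;> fin_cases j <;> simp [insertExtremes] at this ⊢ <;> omega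

theorem avoids132_insertExtremes (hav : Avoids132 (L ++ B ++ [x])) (hL : ∀ v ∈ L, x < v)
    (hB : ∀ v ∈ B, v < x) (hm : ∀ v ∈ L ++ B ++ [x], m < v) (hM : ∀ v ∈ L ++ B ++ [x], v < M)
    (i : Fin 3) : Avoids132 (insertExtremes m M L B x i) := by
  have hBx : Avoids132 (B ++ [x]) := hav.sublist (by simp)
  have hm' := hm
  simp only [mem_append, List.mem_singleton, or_imp, forall_and, forall_eq] at hm' hM
  obtain ⟨⟨hmL, hmB⟩, hmx⟩ := hm'
  obtain ⟨⟨hML, hMB⟩, hxM⟩ := hM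
  fin_cases i
  · have h := hav.append_min_cons (P := L ++ B) (Q := [x]) (m := m) (by simp) hm
    simpa [insertExtremes] using (avoids132_append_cons_iff (R := []) (M := M) (by grind)).mpr
      ⟨h, avoids132_nil, by simp⟩
  · have h := hBx.append_min_cons (P := B) (Q := [x]) (m := m) (by simp) (by grind)
    simpa [insertExtremes] using (avoids132_append_cons_iff (L := L) (M := M) (by grind)).mpr
      ⟨hav.sublist (by simp), h, by grind⟩
  · have h := (by simpa using hBx : Avoids132 (B ++ [x] ++ [])).append_min_cons (m := m) (by simp)
      (by grind)
    simpa [insertExtremes] using (avoids132_append_cons_iff (L := L) (M := M) (by grind)).mpr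
      ⟨hav.sublist (by simp), h, by grind⟩

theorem rlRecordCount_insertExtremes (hL : ∀ v ∈ L, x < v) (hB : ∀ v ∈ B, v < x)
    (hm : ∀ v ∈ L ++ B ++ [x], m < v) (hM : ∀ v ∈ L ++ B ++ [x], v < M) (i : Fin 3) :
    rlRecordCount (· < ·) (insertExtremes m M L B x i) +
      rlRecordCount (· > ·) (insertExtremes m M L B x i) = 4 := by
  simp only [mem_append, List.mem_singleton, or_imp, forall_and, forall_eq] at hm hM
  obtain ⟨⟨hmL, hmB⟩, hmx⟩ := hm
  obtain ⟨⟨hML, hMB⟩, hxM⟩ := hM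
  have hmin : ∀ {A : List ℕ} (T : List ℕ), m ∈ T → (∀ v ∈ A, m < v) →
      rlRecordCount (· > ·) (A ++ T) = rlRecordCount (· > ·) T := fun T hT hA =>
    rlRecordCount_append_of_forall_exists fun v hv => ⟨m, hT, not_lt.mpr (hA v hv).le⟩
  have hmax : ∀ {A : List ℕ} (T : List ℕ) {y : ℕ}, y ∈ T → (∀ v ∈ A, v < y) →
      rlRecordCount (· < ·) (A ++ T) = rlRecordCount (· < ·) T := fun T y hT hA =>
    rlRecordCount_append_of_forall_exists fun v hv => ⟨y, hT, not_lt.mpr (hA v hv).le⟩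
  fin_cases i
  · have hmaxima : rlRecordCount (· < ·) (L ++ B ++ [m, x, M]) = 1 := by
      rw [show L ++ B ++ [m, x, M] = L ++ B ++ [m, x] ++ [M] by simp,
        hmax [M] (List.mem_singleton_self M) (by grind), rlRecordCount_singleton]
    have hminima : rlRecordCount (· > ·) (L ++ B ++ [m, x, M]) = 3 := by
      rw [hmin [m, x, M] mem_cons_self (by grind)]
      simp [rlRecordCount_cons, hmx, hxM, hmx.trans hxM]
    simp only [insertExtremes]
    omega
  · simp only [insertExtremes]
    rw [hmin [m, x] mem_cons_self (by grind), append_assoc, cons_append,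
      hmax _ mem_cons_self (by grind), rlRecordCount_cons, if_pos (by grind),
      hmax [m, x] (y := x) (by simp) hB]
    simp [rlRecordCount_cons, hmx, not_lt.mpr hmx.le]
  · simp only [insertExtremes]
    rw [hmin [x, m] (by simp) (by grind), append_assoc, cons_append,
      hmax _ mem_cons_self (by grind), rlRecordCount_cons, if_pos (by grind),
      hmax [x, m] mem_cons_self hB]
    simp [rlRecordCount_cons, hmx, not_lt.mpr hmx.le]

end insertExtremes

theorem Avoids132.exists_eq_insertExtremes {l : List ℕ} {m M : ℕ} (hav : Avoids132 l)
    (hnd : l.Nodup) (hm : m ∈ l) (hM : M ∈ l) (hbound : ∀ v ∈ l, m ≤ v ∧ v ≤ M) (hmM : m ≠ M)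
    (h : rlRecordCount (· < ·) l + rlRecordCount (· > ·) l = 4) :
    ∃ i L B x, l = insertExtremes m M L B x i ∧ (∀ v ∈ L, x < v) ∧ ∀ v ∈ B, v < x := by
  obtain ⟨L, R, rfl⟩ := append_of_mem hM
  obtain ⟨hMLR, hndLR⟩ := nodup_cons.mp (nodup_middle.mp hnd)
  have hlt : ∀ v ∈ L ++ R, v < M := fun v hv =>
    lt_of_le_of_ne (hbound v (by simp at hv ⊢; tauto)).2 fun e => hMLR (e ▸ hv)
  obtain ⟨hL, hR, hcross⟩ := (avoids132_append_cons_iff hlt).mp hav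
  have hcross' : ∀ v ∈ L, ∀ y ∈ R, y < v := fun v hv y hy =>
    lt_of_le_of_ne (hcross v hv y hy) ((nodup_append.mp hndLR).2.2 v hv y hy).symm
  have hmaxima := rlRecordCount_lt_append_cons_of_forall_lt hlt
  rcases eq_or_ne R [] with rfl | hR0
  · have hminima : rlRecordCount (· > ·) (L ++ [M]) = rlRecordCount (· > ·) L + 1 := by
      rw [rlRecordCount_append_of_forall_forall fun v hv y hy => by
        simpa [List.mem_singleton.mp hy] using hlt v (by simpa using hv), rlRecordCount_singleton]
    have hmL : m ∈ L := by simpa [hmM] using hm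
    obtain ⟨L', B, x, rfl, hL', hB⟩ := hL.exists_of_rlRecordCount_gt_eq_two
      (nodup_append.mp hndLR).1 hmL (fun v hv => (hbound v (by simp [hv])).1)
      (by simp only [rlRecordCount_nil] at hmaxima; omega)
    exact ⟨0, L', B, x, by simp [insertExtremes], hL', hB⟩
  · obtain ⟨y, hy⟩ := exists_mem_of_ne_nil R hR0
    have hmR : m ∈ R := by
      rcases mem_append.mp hm with hmL | hmMR
      · have := hcross' m hmL y hy
        have := (hbound y (by simp [hy])).1
        omega
      · simpa [hmM] using hmMR
    have hminima : rlRecordCount (· > ·) (L ++ M :: R) = rlRecordCount (· > ·) R := by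
      rw [show L ++ M :: R = L ++ [M] ++ R by simp]
      exact rlRecordCount_append_of_forall_exists fun v hv =>
        ⟨m, hmR, not_lt.mpr (hbound v (by simp at hv ⊢; tauto)).1⟩
    obtain ⟨B, x, hshape, hB⟩ := hR.exists_of_rlRecordCount_eq_three (nodup_append.mp hndLR).2.1
      hmR (fun v hv => (hbound v (by simp [hv])).1) (by omega)
    have hLx : ∀ v ∈ L, x < v := fun v hv =>
      hcross' v hv x (by rcases hshape with rfl | rfl <;> simp)
    rcases hshape with rfl | rfl
    · exact ⟨1, L, B, x, by simp [insertExtremes], hLx, hB⟩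
    · exact ⟨2, L, B, x, by simp [insertExtremes], hLx, hB⟩

theorem List.range'_perm_cons_cons (a n : ℕ) :
    range' a (n + 2) ~ a :: (a + n + 1) :: range' (a + 1) n := by
  rw [range'_succ, range'_1_concat, perm_cons, add_right_comm]
  exact perm_append_singleton _ _

theorem erase_erase_mem_avoiders {a n : ℕ} {l : List ℕ} (hl : l ∈ avoiders a (n + 2)) :
    (l.erase (a + n + 1)).erase a ∈ avoiders (a + 1) n := by
  obtain ⟨hperm, hav⟩ := mem_avoiders.mp hl
  refine mem_avoiders.mpr ⟨?_, hav.sublist ((erase_sublist ..).trans (erase_sublist ..))⟩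
  have := ((hperm.trans (range'_perm_cons_cons a n)).erase (a + n + 1)).erase a
  rwa [erase_cons_tail (by simp; omega), erase_cons_head, erase_cons_head] at this

theorem filter_erase_erase_eq_image {a n x : ℕ} {L B : List ℕ}
    (hτ : L ++ B ++ [x] ∈ avoiders (a + 1) n) (hL : ∀ v ∈ L, x < v) (hB : ∀ v ∈ B, v < x) :
    (((avoiders a (n + 2)).filter fun l =>
      rlRecordCount (· < ·) l + rlRecordCount (· > ·) l = 4).filter fun l =>
        (l.erase (a + n + 1)).erase a = L ++ B ++ [x]) =
      univ.image (insertExtremes a (a + n + 1) L B x) := by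
  set M := a + n + 1
  obtain ⟨hτperm, hτav⟩ := mem_avoiders.mp hτ
  have hbound : ∀ v ∈ L ++ B ++ [x], a < v ∧ v < M := fun v hv => by
    have := hτperm.mem_iff.mp hv
    simp only [mem_range'_1] at this
    omega
  ext l
  simp only [Finset.mem_filter, mem_image, mem_univ, true_and, mem_avoiders]
  constructor
  · rintro ⟨⟨⟨hperm, hav⟩, h4⟩, hl⟩
    have hlnd := hperm.nodup_iff.mpr nodup_range'
    obtain ⟨i, L', B', x', rfl, hL', hB'⟩ := hav.exists_eq_insertExtremes (m := a) (M := M) hlnd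
      (hperm.mem_iff.mpr (by simp)) (hperm.mem_iff.mpr (by simp; omega))
      (fun v hv => by have := hperm.mem_iff.mp hv; simp at this; omega) (by omega) h4
    rw [erase_erase_insertExtremes ((insertExtremes_perm i).nodup_iff.mp hlnd)] at hl
    obtain ⟨hLB, hx⟩ := append_inj' hl rfl
    obtain rfl : x' = x := by simpa using hx
    obtain ⟨rfl, rfl⟩ := eq_of_append_eq_append_of_lt hLB hL' hB' hL hB
    exact ⟨i, rfl⟩
  · rintro ⟨i, rfl⟩
    have hperm : a :: M :: (L ++ B ++ [x]) ~ range' a (n + 2) :=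
      ((perm_cons _).mpr ((perm_cons _).mpr hτperm)).trans (range'_perm_cons_cons a n).symm
    exact ⟨⟨⟨(insertExtremes_perm i).trans hperm, avoids132_insertExtremes hτav hL hB
        (fun v hv => (hbound v hv).1) (fun v hv => (hbound v hv).2) i⟩,
      rlRecordCount_insertExtremes hL hB (fun v hv => (hbound v hv).1)
        (fun v hv => (hbound v hv).2) i⟩,
      erase_erase_insertExtremes (hperm.nodup_iff.mpr nodup_range') i⟩

theorem card_filter_erase_erase {a n : ℕ} {τ : List ℕ} (hτ : τ ∈ avoiders (a + 1) n)
    (hn : 1 ≤ n) : (((avoiders a (n + 2)).filter fun l =>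
      rlRecordCount (· < ·) l + rlRecordCount (· > ·) l = 4).filter fun l =>
        (l.erase (a + n + 1)).erase a = τ).card = 3 := by
  obtain ⟨hτperm, hτav⟩ := mem_avoiders.mp hτ
  have hlen : τ.length = n := by simpa using hτperm.length_eq
  obtain ⟨A, x, rfl⟩ : ∃ A x, τ = A ++ [x] := (eq_nil_or_concat' τ).resolve_left fun h => by
    simp [h] at hlen
    omega
  have hτnd := hτperm.nodup_iff.mpr nodup_range'
  obtain ⟨L, B, rfl, hL, hB⟩ :=
    hτav.exists_split_of_concat fun hx => (nodup_append.mp hτnd).2.2 x hx x (by simp) rfl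
  have hx : a < x ∧ x < a + n + 1 := by
    have := hτperm.mem_iff.mp (by simp : x ∈ L ++ B ++ [x])
    simp only [mem_range'_1] at this
    omega
  rw [filter_erase_erase_eq_image hτ hL hB,
    card_image_of_injective _ (insertExtremes_injective hx.1 hx.2)]
  rfl

theorem card_avoiders_filter_rlRecordCount_eq_four (a n : ℕ) (hn : 1 ≤ n) :
    ((avoiders a (n + 2)).filter fun l =>
      rlRecordCount (· < ·) l + rlRecordCount (· > ·) l = 4).card = 3 * catalan n := by
  rw [card_eq_sum_card_fiberwise fun l hl => erase_erase_mem_avoiders (Finset.mem_filter.mp hl).1,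
    sum_const_nat fun τ hτ => card_filter_erase_erase hτ hn, card_avoiders, mul_comm]

section Permutations

variable {n : ℕ}

theorem List.triple_sublist_ofFn {f : Fin n → ℕ} {a b c : ℕ} :
    [a, b, c] <+ ofFn f ↔ ∃ i j k, i < j ∧ j < k ∧ f i = a ∧ f j = b ∧ f k = c := by
  rw [ofFn_eq_map, sublist_map_iff]
  constructor
  · rintro ⟨l, hl, hmap⟩
    obtain ⟨i, j, k, rfl⟩ : ∃ i j k, l = [i, j, k] := by
      rcases l with _ | ⟨i, _ | ⟨j, _ | ⟨k, _ | _⟩⟩⟩ <;> simp at hmap ⊢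
    have := (pairwise_lt_finRange n).sublist hl
    simp only [map_cons, map_nil, cons.injEq] at hmap
    simp only [pairwise_cons, List.mem_cons, not_mem_nil] at this
    exact ⟨i, j, k, by grind, by grind, hmap.1.symm, hmap.2.1.symm, hmap.2.2.1.symm⟩
  · rintro ⟨i, j, k, hij, hjk, rfl, rfl, rfl⟩
    have hpw : [i, j, k].Pairwise (· ≤ ·) := by simp [hij.le, hjk.le, (hij.trans hjk).le]
    refine ⟨[i, j, k], sublist_of_subperm_of_pairwise ?_ hpw
      ((pairwise_lt_finRange n).imp le_of_lt), rfl⟩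
    refine subperm_of_subset ?_ fun v _ => mem_finRange v
    simp [hij.ne, hjk.ne, (hij.trans hjk).ne]

theorem avoids132_iff_ofFn (σ : Equiv.Perm (Fin n)) :
    avoids132 σ ↔ Avoids132 (ofFn fun i => (σ i : ℕ)) := by
  constructor
  · rintro h a b c habc ⟨hac, hcb⟩
    obtain ⟨i, j, k, hij, hjk, rfl, rfl, rfl⟩ := triple_sublist_ofFn.mp habc
    exact h ⟨i, j, k, hij, hjk, hac, hcb⟩
  · rintro h ⟨i, j, k, hij, hjk, hik, hkj⟩
    exact h _ _ _ (triple_sublist_ofFn.mpr ⟨i, j, k, hij, hjk, rfl, rfl, rfl⟩) ⟨hik, hkj⟩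

theorem mmp1001Count_ofFn (f : Fin n → ℕ) : mmp1001Count (ofFn f) =
    #{i | (∃ j, i < j ∧ f i < f j) ∧ ∃ j, i < j ∧ f j < f i} := by
  induction n with
  | zero => rfl
  | succ n ih =>
    rw [ofFn_succ, mmp1001Count, ih, Fin.card_filter_univ_succ', add_comm]
    simp [Fin.exists_fin_succ, Fin.succ_lt_succ_iff, mem_ofFn]

theorem mmp_one_zero_zero_one_eq (σ : Equiv.Perm (Fin n)) :
    mmp 1 0 0 1 σ = mmp1001Count (ofFn fun i => (σ i : ℕ)) := by
  classical
  rw [mmp1001Count_ofFn, mmp, Nat.card_eq_fintype_card, Fintype.card_subtype]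
  congr 1
  ext i
  simp [mmpMatch, Nat.one_le_iff_ne_zero, Finset.filter_eq_empty_iff]

theorem ofFn_perm_range' (σ : Equiv.Perm (Fin n)) : ofFn (fun i => (σ i : ℕ)) ~ range' 0 n := by
  refine (perm_ext_iff_of_nodup ?_ nodup_range').mpr fun v => ?_
  · exact nodup_ofFn.mpr fun i j h => σ.injective (Fin.ext h)
  · simp only [mem_ofFn, mem_range'_1, zero_add, zero_le, true_and]
    exact ⟨fun ⟨i, hi⟩ => hi ▸ (σ i).isLt, fun hv => ⟨σ.symm ⟨v, hv⟩, by simp⟩⟩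

theorem exists_perm_ofFn_eq {l : List ℕ} (hl : l ~ range' 0 n) :
    ∃ σ : Equiv.Perm (Fin n), ofFn (fun i => (σ i : ℕ)) = l := by
  have hlen : l.length = n := by simpa using hl.length_eq
  have hlt : ∀ i : Fin n, l[i] < n := fun i => by
    simpa using hl.mem_iff.mp (getElem_mem (hlen ▸ i.isLt))
  let f : Fin n → Fin n := fun i => ⟨l[i], hlt i⟩
  have hf : Function.Injective f := fun i j h =>
    Fin.ext ((hl.nodup_iff.mpr nodup_range').getElem_inj_iff.mp (congrArg Fin.val h))
  exact ⟨Equiv.ofBijective f hf.bijective_of_finite, ext_getElem (by simp [hlen]) fun k _ _ => by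
    simp [f]⟩

theorem natCard_perm_eq_card_filter (p : List ℕ → Prop) [DecidablePred p] :
    Nat.card {σ : Equiv.Perm (Fin n) // p (ofFn fun i => (σ i : ℕ))} =
      ((range' 0 n).permutations.toFinset.filter p).card := by
  rw [Nat.card_eq_fintype_card, Fintype.card_subtype]
  refine card_bij (fun σ _ => ofFn fun i => (σ i : ℕ)) (fun σ hσ => ?_) (fun σ _ τ _ h => ?_)
    fun l hl => ?_
  · simp only [Finset.mem_filter, mem_univ, true_and] at hσ
    simpa [mem_permutations, ofFn_perm_range' σ] using hσ
  · exact Equiv.ext fun i => Fin.ext (congrFun (ofFn_injective h) i)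
  · simp only [Finset.mem_filter, mem_toFinset, mem_permutations] at hl
    obtain ⟨σ, rfl⟩ := exists_perm_ofFn_eq hl.1
    exact ⟨σ, by simpa using hl.2, rfl⟩

end Permutations

theorem stmt16 (n : ℕ) (hn : 3 ≤ n) :
    Nat.card {σ : Equiv.Perm (Fin n) // avoids132 σ ∧ mmp 1 0 0 1 σ = n - 3} =
      3 * catalan (n - 2) := by
  obtain ⟨k, rfl⟩ : ∃ k, n = k + 1 + 2 := ⟨n - 3, by omega⟩
  classical
  simp only [avoids132_iff_ofFn, mmp_one_zero_zero_one_eq]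
  rw [natCard_perm_eq_card_filter fun l => Avoids132 l ∧ mmp1001Count l = k + 1 + 2 - 3,
    Nat.add_sub_cancel, ← card_avoiders_filter_rlRecordCount_eq_four 0 (k + 1) (by omega)]
  congr 1
  ext l
  simp only [Finset.mem_filter, mem_toFinset, mem_permutations, mem_avoiders, and_assoc]
  refine and_congr_right fun hl => and_congr_right fun _ => ?_
  have hlen : l.length = k + 3 := by simpa using hl.length_eq
  have := mmp1001Count_add_rlRecordCount (ne_nil_of_length_pos (by omega))
    (hl.nodup_iff.mpr nodup_range')
  omega
end

section
/- For k,ℓ ≥ 1 and n ≥ k+ℓ+1, the maximum number of matches of MMP(0,k,0,ℓ) over σ ∈ S_n(132) is n-k-ℓ, and the number of σ ∈ S_n(132) achieving this maximum is C_k · C_ℓ · C_{n-k-ℓ}. -/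
open Finset

/-!
A position matching MMP(0,k,0,ℓ) has at least k positions before it and ℓ after it, so only the
n-k-ℓ middle positions k, …, n-ℓ-1 can match. Let σ avoid 132 with every middle position matching.
A middle entry σ_i has k larger entries before it; were some σ_j with j < k smaller, all of them
would precede j (otherwise j, t, i form a 132), which is impossible. The last middle position has
ℓ smaller entries after it, so every later entry is smaller, and 132-avoidance carries this over
to every middle entry. Hence σ is a skew sum A ⊖ M ⊖ C with |A| = k, |C| = ℓ, and conversely every
such skew sum attains the bound. A skew sum avoids 132 iff its summands do, and splitting a
132-avoider at its maximum writes it as (A ⊕ 1) ⊖ B, which gives |S_m(132)| = C_m through the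
Catalan recursion.
-/

open Equiv Finset

instance {n a b c d : ℕ} (σ : Perm (Fin n)) : DecidablePred (mmpMatch a b c d σ) :=
  fun i => by unfold mmpMatch; infer_instance

section Counting
variable {n : ℕ}

lemma card_filter_le_val (m : ℕ) : #{i : Fin n | m ≤ (i : ℕ)} = n - m := by
  have := card_filter_add_card_filter_not (s := univ) fun i : Fin n => (i : ℕ) < m
  simp only [not_lt, Fin.card_filter_val_lt, card_univ, Fintype.card_fin] at this
  omega

lemma card_filter_le_val_lt (a : ℕ) {b : ℕ} (hb : b ≤ n) :
    #{i : Fin n | a ≤ (i : ℕ) ∧ (i : ℕ) < b} = b - a := by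
  rw [← card_map Fin.valEmbedding, ← Nat.card_Ico a b]
  congr 1
  ext v
  simp only [mem_map, mem_filter, mem_univ, true_and, Fin.valEmbedding_apply, mem_Ico]
  exact ⟨by rintro ⟨i, hi, rfl⟩; exact hi, fun hv => ⟨⟨v, by omega⟩, hv, rfl⟩⟩

lemma card_filter_lt_le (i : Fin n) (p : Fin n → Prop) [DecidablePred p] :
    #{j | j < i ∧ p j} ≤ i :=
  (card_le_card fun _ hj => mem_Iio.2 (mem_filter.1 hj).2.1).trans_eq (Fin.card_Iio i)

lemma card_filter_gt_le (i : Fin n) (p : Fin n → Prop) [DecidablePred p] :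
    #{j | i < j ∧ p j} ≤ n - 1 - i :=
  (card_le_card fun _ hj => mem_Ioi.2 (mem_filter.1 hj).2.1).trans_eq (Fin.card_Ioi i)

lemma forall_gt_of_le_card_filter {i : Fin n} {p : Fin n → Prop} [DecidablePred p]
    (h : n - 1 - i ≤ #{j | i < j ∧ p j}) {j : Fin n} (hj : i < j) : p j := by
  have hIoi : ({j | i < j ∧ p j} : Finset (Fin n)) = Ioi i :=
    eq_of_subset_of_card_le (fun j hj => mem_Ioi.2 (mem_filter.1 hj).2.1)
      ((Fin.card_Ioi i).trans_le h)
  have := hIoi ▸ mem_Ioi.2 hj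
  exact (mem_filter.1 this).2.2

lemma card_le_apply_of_forall_apply_lt (σ : Perm (Fin n)) {s : Finset (Fin n)} {i : Fin n}
    (h : ∀ j ∈ s, σ j < σ i) : #s ≤ σ i :=
  (card_le_card_of_injOn σ (fun j hj => mem_Iio.2 (h j hj)) σ.injective.injOn).trans_eq
    (Fin.card_Iio _)

lemma card_le_sub_apply_of_forall_lt_apply (σ : Perm (Fin n)) {s : Finset (Fin n)} {i : Fin n}
    (h : ∀ j ∈ s, σ i < σ j) : #s ≤ n - 1 - σ i :=
  (card_le_card_of_injOn σ (fun j hj => mem_Ioi.2 (h j hj)) σ.injective.injOn).trans_eq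
    (Fin.card_Ioi _)

end Counting

section Pattern
variable {m n : ℕ} {σ : Perm (Fin n)}

lemma avoids132_of_embedding {τ : Perm (Fin m)} {f : Fin m → Fin n} (hf : StrictMono f) (c : ℕ)
    (hfτ : ∀ x, (σ (f x) : ℕ) = c + τ x) (hσ : avoids132 σ) : avoids132 τ := by
  rintro ⟨i, j, k, hij, hjk, hik, hkj⟩
  refine hσ ⟨f i, f j, f k, hf hij, hf hjk, ?_, ?_⟩ <;>
    simp only [Fin.lt_def, hfτ] at * <;> omega

lemma card_larger_before_le (hσ : avoids132 σ) {i j : Fin n} (hσji : σ j < σ i) :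
    #{t | t < i ∧ σ i < σ t} ≤ j := by
  refine (card_le_card fun t ht => mem_Iio.2 ?_).trans_eq (Fin.card_Iio j)
  obtain ⟨hti, hσit⟩ := (mem_filter.1 ht).2
  by_contra! hjt
  rcases hjt.eq_or_lt with rfl | hjt
  · exact (hσji.trans hσit).false
  · exact hσ ⟨j, t, i, hjt, hti, hσji, hσit⟩

lemma apply_lt_of_le_card_larger_before (hσ : avoids132 σ) {k : ℕ} {i j : Fin n}
    (hi : k ≤ #{t | t < i ∧ σ i < σ t}) (hj : (j : ℕ) < k) : σ i < σ j := by
  have hji : j < i := Fin.lt_def.2 ((hj.trans_le hi).trans_le (card_filter_lt_le i _))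
  by_contra! hσij
  have := hi.trans (card_larger_before_le hσ (hσij.lt_of_ne (σ.injective.ne hji.ne)))
  omega

end Pattern

def IsSkewSplitAt {n : ℕ} (a : ℕ) (σ : Perm (Fin n)) : Prop :=
  ∀ i j : Fin n, (i : ℕ) < a → a ≤ (j : ℕ) → σ j < σ i

def skewSum {a b : ℕ} (A : Perm (Fin a)) (B : Perm (Fin b)) : Perm (Fin (a + b)) :=
  finSumFinEquiv.symm.trans <| (sumCongr A B).trans <| (sumComm _ _).trans <|
    finSumFinEquiv.trans (finCongr (Nat.add_comm b a))

section SkewSum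
variable {a b : ℕ} (A : Perm (Fin a)) (B : Perm (Fin b))

@[simp] lemma skewSum_castAdd (x : Fin a) : (skewSum A B (Fin.castAdd b x) : ℕ) = b + A x := by
  simp [skewSum, Nat.add_comm]

@[simp] lemma skewSum_natAdd (y : Fin b) : (skewSum A B (Fin.natAdd a y) : ℕ) = B y := by
  simp [skewSum]

lemma isSkewSplitAt_skewSum : IsSkewSplitAt a (skewSum A B) := by
  intro i j hi hj
  induction i using Fin.addCases with
  | right x => simp at hi
  | left x =>
    induction j using Fin.addCases with
    | left y => simp only [Fin.val_castAdd] at hj; omega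
    | right y => rw [Fin.lt_def, skewSum_castAdd, skewSum_natAdd]; omega

lemma isSkewSplitAt_skewSum_add_iff {c : ℕ} :
    IsSkewSplitAt (a + c) (skewSum A B) ↔ IsSkewSplitAt c B := by
  constructor
  · intro h i j hi hj
    have := h (Fin.natAdd a i) (Fin.natAdd a j) (by simp [hi]) (by simp [hj])
    rwa [Fin.lt_def, skewSum_natAdd, skewSum_natAdd, ← Fin.lt_def] at this
  · intro h i j hi hj
    induction j using Fin.addCases with
    | left y => simp only [Fin.val_castAdd] at hj; omega
    | right y =>
      simp only [Fin.val_natAdd] at hj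
      induction i using Fin.addCases with
      | left x => rw [Fin.lt_def, skewSum_castAdd, skewSum_natAdd]; omega
      | right x =>
        simp only [Fin.val_natAdd] at hi
        have := h x y (by omega) (by omega)
        rwa [Fin.lt_def, skewSum_natAdd, skewSum_natAdd, ← Fin.lt_def]

-- An occurrence cannot straddle the two blocks, where the values are in the wrong order.
lemma avoids132_skewSum_iff : avoids132 (skewSum A B) ↔ avoids132 A ∧ avoids132 B := by
  refine ⟨fun h => ⟨avoids132_of_embedding (Fin.strictMono_castAdd b) b (skewSum_castAdd A B) h,
    avoids132_of_embedding (Fin.strictMono_natAdd a) 0 (by simp) h⟩, ?_⟩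
  rintro ⟨hA, hB⟩ ⟨i, j, k, hij, hjk, hik, hkj⟩
  induction i using Fin.addCases <;> induction j using Fin.addCases <;>
    induction k using Fin.addCases <;>
    simp only [Fin.lt_def, skewSum_castAdd, skewSum_natAdd, Fin.val_castAdd, Fin.val_natAdd]
      at hij hjk hik hkj <;>
    first
    | omega
    | exact hA ⟨_, _, _, Fin.lt_def.2 hij, Fin.lt_def.2 hjk, Fin.lt_def.2 (by omega),
        Fin.lt_def.2 (by omega)⟩
    | exact hB ⟨_, _, _, Fin.lt_def.2 (by omega), Fin.lt_def.2 (by omega), Fin.lt_def.2 hik,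
        Fin.lt_def.2 hkj⟩

end SkewSum

namespace IsSkewSplitAt
variable {a b : ℕ} {σ : Perm (Fin (a + b))}

lemma le_apply_castAdd (h : IsSkewSplitAt a σ) (x : Fin a) : b ≤ σ (Fin.castAdd b x) := by
  have := card_le_apply_of_forall_apply_lt σ (s := {j | a ≤ (j : ℕ)}) (i := Fin.castAdd b x)
    fun j hj => h _ j (by simp) (mem_filter.1 hj).2
  rw [card_filter_le_val] at this
  omega

lemma apply_natAdd_lt (h : IsSkewSplitAt a σ) (y : Fin b) : (σ (Fin.natAdd a y) : ℕ) < b := by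
  have := card_le_sub_apply_of_forall_lt_apply σ (s := {i | (i : ℕ) < a}) (i := Fin.natAdd a y)
    fun i hi => h i _ (mem_filter.1 hi).2 (by simp)
  rw [Fin.card_filter_val_lt] at this
  omega

noncomputable def left (h : IsSkewSplitAt a σ) : Perm (Fin a) :=
  Equiv.ofBijective
    (fun x => ⟨σ (Fin.castAdd b x) - b, by have := h.le_apply_castAdd x; omega⟩) <|
    Finite.injective_iff_bijective.1 fun x y hxy => by
      have hx := h.le_apply_castAdd x
      have hy := h.le_apply_castAdd y
      have : σ (Fin.castAdd b x) = σ (Fin.castAdd b y) :=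
        Fin.ext (by rw [Fin.mk.injEq] at hxy; omega)
      exact Fin.castAdd_injective _ _ (σ.injective this)

noncomputable def right (h : IsSkewSplitAt a σ) : Perm (Fin b) :=
  Equiv.ofBijective (fun y => ⟨σ (Fin.natAdd a y), h.apply_natAdd_lt y⟩) <|
    Finite.injective_iff_bijective.1 fun x y hxy =>
      Fin.natAdd_injective _ _ (σ.injective (Fin.ext (by simpa using hxy)))

lemma skewSum_left_right (h : IsSkewSplitAt a σ) : skewSum h.left h.right = σ := by
  ext i
  induction i using Fin.addCases with
  | left x =>
    have := h.le_apply_castAdd x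
    rw [skewSum_castAdd, left, ofBijective_apply, Fin.val_mk]
    omega
  | right y => simp [right]

end IsSkewSplitAt

noncomputable def skewSumEquiv (a b : ℕ) :
    Perm (Fin a) × Perm (Fin b) ≃ {σ : Perm (Fin (a + b)) // IsSkewSplitAt a σ} :=
  Equiv.ofBijective (fun z => ⟨skewSum z.1 z.2, isSkewSplitAt_skewSum z.1 z.2⟩) <| by
    refine ⟨fun ⟨A, B⟩ ⟨A', B'⟩ h => ?_,
      fun ⟨σ, h⟩ => ⟨(h.left, h.right), Subtype.ext h.skewSum_left_right⟩⟩
    have h' : skewSum A B = skewSum A' B' := congrArg Subtype.val h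
    ext x
    · simpa using congrArg (fun σ : Perm (Fin (a + b)) => (σ (Fin.castAdd b x) : ℕ)) h'
    · simpa using congrArg (fun σ : Perm (Fin (a + b)) => (σ (Fin.natAdd a x) : ℕ)) h'

lemma card_isSkewSplitAt_and {a b : ℕ} (P : Perm (Fin (a + b)) → Prop) :
    Nat.card {σ // IsSkewSplitAt a σ ∧ P σ} =
      Nat.card {z : Perm (Fin a) × Perm (Fin b) // P (skewSum z.1 z.2)} :=
  Nat.card_congr <| (subtypeSubtypeEquivSubtypeInter _ P).symm.trans
    ((skewSumEquiv a b).subtypeEquiv fun _ => Iff.rfl).symm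

noncomputable def numAvoiding132 (m : ℕ) : ℕ := Nat.card {σ : Perm (Fin m) // avoids132 σ}

lemma card_isSkewSplitAt_avoids132 (a b : ℕ) :
    Nat.card {σ : Perm (Fin (a + b)) // IsSkewSplitAt a σ ∧ avoids132 σ} =
      numAvoiding132 a * numAvoiding132 b := by
  rw [card_isSkewSplitAt_and, numAvoiding132, numAvoiding132, ← Nat.card_prod]
  exact Nat.card_congr <| (subtypeEquivRight (q := fun z => avoids132 z.1 ∧ avoids132 z.2)
    fun z => avoids132_skewSum_iff z.1 z.2).trans subtypeProdEquivProd

lemma card_avoids132_isSkewSplitAt_isSkewSplitAt (a b c : ℕ) :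
    Nat.card {σ : Perm (Fin (a + (b + c))) //
        avoids132 σ ∧ IsSkewSplitAt a σ ∧ IsSkewSplitAt (a + b) σ} =
      numAvoiding132 a * numAvoiding132 b * numAvoiding132 c := by
  have hreorder : ∀ σ : Perm (Fin (a + (b + c))),
      avoids132 σ ∧ IsSkewSplitAt a σ ∧ IsSkewSplitAt (a + b) σ ↔
        IsSkewSplitAt a σ ∧ avoids132 σ ∧ IsSkewSplitAt (a + b) σ := fun _ => by tauto
  rw [Nat.card_congr (subtypeEquivRight hreorder), card_isSkewSplitAt_and, mul_assoc,
    ← card_isSkewSplitAt_avoids132 b c, numAvoiding132, ← Nat.card_prod]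
  refine Nat.card_congr <| (subtypeEquivRight fun z => ?_).trans <|
    subtypeProdEquivProd (p := avoids132) (q := fun T => IsSkewSplitAt b T ∧ avoids132 T)
  rw [avoids132_skewSum_iff, isSkewSplitAt_skewSum_add_iff]
  tauto

noncomputable def permFixingLastEquiv (a : ℕ) :
    Perm (Fin a) ≃ {A : Perm (Fin (a + 1)) // A (Fin.last a) = Fin.last a} :=
  (finSuccAboveEquiv (Fin.last a)).permCongr.trans <|
    (Perm.subtypeEquivSubtypePerm _).trans <| subtypeEquivRight fun A => by simp

lemma permFixingLastEquiv_castSucc {a : ℕ} (A : Perm (Fin a)) (x : Fin a) :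
    (permFixingLastEquiv a A : Perm (Fin (a + 1))) x.castSucc = (A x).castSucc := by
  have hx : x.castSucc ≠ Fin.last a := Fin.castSucc_ne_last x
  have hsymm : (finSuccAboveEquiv (Fin.last a)).symm ⟨x.castSucc, hx⟩ = x :=
    (finSuccAboveEquiv _).symm_apply_eq.2 (Subtype.ext (by simp [finSuccAboveEquiv_apply]))
  simp only [permFixingLastEquiv, trans_apply, subtypeEquivRight_apply_coe,
    Perm.subtypeEquivSubtypePerm_apply_coe]
  rw [Perm.ofSubtype_apply_of_mem (p := (· ≠ Fin.last a)) _ hx, permCongr_apply, hsymm,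
    finSuccAboveEquiv_apply]
  exact Fin.succAbove_last_apply _

lemma avoids132_permFixingLastEquiv_iff {a : ℕ} (A : Perm (Fin a)) :
    avoids132 (permFixingLastEquiv a A : Perm (Fin (a + 1))) ↔ avoids132 A := by
  refine ⟨avoids132_of_embedding Fin.strictMono_castSucc 0 fun x => by
    simp [permFixingLastEquiv_castSucc], fun hA => ?_⟩
  rintro ⟨i, j, k, hij, hjk, hik, hkj⟩
  induction k using Fin.lastCases with
  | last =>
    rw [(permFixingLastEquiv a A).2] at hkj
    exact absurd hkj (not_lt.2 (Fin.le_last _))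
  | cast k =>
    obtain ⟨j, rfl⟩ := Fin.exists_castSucc_eq.2 (Fin.ne_last_of_lt hjk)
    obtain ⟨i, rfl⟩ := Fin.exists_castSucc_eq.2 (Fin.ne_last_of_lt hij)
    simp only [permFixingLastEquiv_castSucc, Fin.castSucc_lt_castSucc_iff] at *
    exact hA ⟨i, j, k, hij, hjk, hik, hkj⟩

lemma card_fixing_last_avoids132 (a : ℕ) :
    Nat.card {A : Perm (Fin (a + 1)) // A (Fin.last a) = Fin.last a ∧ avoids132 A} =
      numAvoiding132 a :=
  Nat.card_congr <| (subtypeSubtypeEquivSubtypeInter _ avoids132).symm.trans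
    ((permFixingLastEquiv a).subtypeEquiv fun A =>
      (avoids132_permFixingLastEquiv_iff A).symm).symm

lemma isSkewSplitAt_succ_of_max {n : ℕ} {σ : Perm (Fin n)} (hσ : avoids132 σ) {p : Fin n}
    (hp : ∀ j, σ j ≤ σ p) : IsSkewSplitAt (p + 1) σ := by
  intro i j hi hj
  have hpj : p < j := Fin.lt_def.2 (by omega)
  have hσjp : σ j < σ p := (hp j).lt_of_ne (σ.injective.ne hpj.ne')
  rcases (Nat.lt_succ_iff.1 hi).lt_or_eq with hip | hip
  · by_contra! hij
    exact hσ ⟨i, p, j, hip, hpj, hij.lt_of_ne (σ.injective.ne (Fin.ne_of_lt (hip.trans hpj))), hσjp⟩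
  · rwa [Fin.ext hip]

-- The maximum is located through values, so that the statement makes sense for every `m`
-- and `hm` can be substituted.
lemma card_avoids132_max_at (a b m : ℕ) (hm : m = a + 1 + b) :
    Nat.card {σ : Perm (Fin m) // avoids132 σ ∧ ∀ i : Fin m, (i : ℕ) = a → (σ i : ℕ) + 1 = m} =
      numAvoiding132 a * numAvoiding132 b := by
  subst hm
  let p : Fin (a + 1 + b) := Fin.castAdd b (Fin.last a)
  have hp : ∀ i : Fin (a + 1 + b), (i : ℕ) = a ↔ i = p := fun i => by simp [p, Fin.ext_iff]
  simp only [hp, forall_eq]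
  have hsplit : ∀ σ : Perm (Fin (a + 1 + b)), avoids132 σ ∧ (σ p : ℕ) + 1 = a + 1 + b ↔
      IsSkewSplitAt (a + 1) σ ∧ avoids132 σ ∧ (σ p : ℕ) + 1 = a + 1 + b := fun σ =>
    ⟨fun h => ⟨isSkewSplitAt_succ_of_max h.1 (p := p) fun j => Fin.le_def.2 (by omega), h⟩,
      And.right⟩
  have hblocks : ∀ z : Perm (Fin (a + 1)) × Perm (Fin b),
      avoids132 (skewSum z.1 z.2) ∧ (skewSum z.1 z.2 p : ℕ) + 1 = a + 1 + b ↔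
        (z.1 (Fin.last a) = Fin.last a ∧ avoids132 z.1) ∧ avoids132 z.2 := fun z => by
    rw [avoids132_skewSum_iff, skewSum_castAdd, Fin.ext_iff, Fin.val_last]
    constructor <;> rintro ⟨⟨hA, hB⟩, h⟩ <;> refine ⟨⟨?_, ?_⟩, ?_⟩ <;> first | assumption | omega
  rw [Nat.card_congr (subtypeEquivRight hsplit), card_isSkewSplitAt_and,
    ← card_fixing_last_avoids132, numAvoiding132, ← Nat.card_prod]
  exact Nat.card_congr <| (subtypeEquivRight hblocks).trans <|
    subtypeProdEquivProd (p := fun A => A (Fin.last a) = Fin.last a ∧ avoids132 A)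
      (q := avoids132)

lemma numAvoiding132_succ (n : ℕ) :
    numAvoiding132 (n + 1) = ∑ p : Fin (n + 1), numAvoiding132 p * numAvoiding132 (n - p) := by
  rw [numAvoiding132, ← Nat.card_congr
      (sigmaFiberEquiv fun σ : {σ : Perm (Fin (n + 1)) // avoids132 σ} => σ.1.symm (Fin.last n)),
    Nat.card_sigma]
  refine sum_congr rfl fun p _ => ?_
  rw [← card_avoids132_max_at p (n - p) (n + 1) (by omega)]
  refine Nat.card_congr <|
    (subtypeSubtypeEquivSubtypeInter avoids132 fun σ => σ.symm (Fin.last n) = p).trans <|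
    subtypeEquivRight fun σ => and_congr_right fun _ => ?_
  rw [symm_apply_eq, eq_comm]
  refine ⟨fun h i hi => ?_, fun h => Fin.ext ?_⟩
  · rw [show i = p from Fin.ext hi, h, Fin.val_last]
  · have := h p rfl
    rw [Fin.val_last]
    omega

lemma numAvoiding132_eq_catalan (m : ℕ) : numAvoiding132 m = catalan m := by
  induction m using Nat.strong_induction_on with
  | _ m ih =>
    match m with
    | 0 =>
      rw [numAvoiding132, catalan_zero, Nat.card_congr
        (subtypeUnivEquiv (p := avoids132) fun _ ⟨i, _⟩ => i.elim0), Nat.card_unique]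
    | n + 1 =>
      rw [numAvoiding132_succ, catalan_succ]
      exact sum_congr rfl fun p _ => by rw [ih p (by omega), ih (n - p) (by omega)]

section Mesh
variable {n : ℕ} (k l : ℕ) (σ : Perm (Fin n))

lemma mmp_eq_card_filter {a b c d : ℕ} : mmp a b c d σ = #{i | mmpMatch a b c d σ i} := by
  rw [mmp, Nat.card_eq_fintype_card, Fintype.card_subtype]

lemma filter_mmpMatch_subset :
    ({i | mmpMatch 0 k 0 l σ i} : Finset (Fin n)) ⊆
      ({i | k ≤ (i : ℕ) ∧ (i : ℕ) < n - l} : Finset (Fin n)) := by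
  intro i hi
  obtain ⟨-, hk, -, hl⟩ := (mem_filter.1 hi).2
  have := card_filter_lt_le i _ |>.trans' hk
  have := card_filter_gt_le i _ |>.trans' hl
  exact mem_filter.2 ⟨mem_univ _, by omega, by omega⟩

lemma mmp_le : mmp 0 k 0 l σ ≤ n - k - l := by
  rw [mmp_eq_card_filter, Nat.sub_right_comm, ← card_filter_le_val_lt k (Nat.sub_le n l)]
  exact card_le_card (filter_mmpMatch_subset k l σ)

lemma mmp_eq_iff_forall_mmpMatch : mmp 0 k 0 l σ = n - k - l ↔
    ∀ i : Fin n, k ≤ (i : ℕ) → (i : ℕ) < n - l → mmpMatch 0 k 0 l σ i := by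
  rw [mmp_eq_card_filter, Nat.sub_right_comm, ← card_filter_le_val_lt k (Nat.sub_le n l)]
  refine ⟨fun h i hk hl => ?_, fun h => congrArg card <| (filter_mmpMatch_subset k l σ).antisymm
    fun i hi => mem_filter.2 ⟨mem_univ _, h i (mem_filter.1 hi).2.1 (mem_filter.1 hi).2.2⟩⟩
  have hmid : i ∈ ({i | k ≤ (i : ℕ) ∧ (i : ℕ) < n - l} : Finset (Fin n)) :=
    mem_filter.2 ⟨mem_univ _, hk, hl⟩
  rw [← eq_of_subset_of_card_le (filter_mmpMatch_subset k l σ) h.ge] at hmid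
  exact (mem_filter.1 hmid).2

lemma mmpMatch_of_isSkewSplitAt (hk : IsSkewSplitAt k σ) (hl : IsSkewSplitAt (n - l) σ)
    {i : Fin n} (hki : k ≤ (i : ℕ)) (hil : (i : ℕ) < n - l) : mmpMatch 0 k 0 l σ i := by
  refine ⟨Nat.zero_le _, ?_, Nat.zero_le _, ?_⟩
  · calc k = #{j : Fin n | (j : ℕ) < k} := by rw [Fin.card_filter_val_lt]; omega
      _ ≤ _ := card_le_card fun j hj => mem_filter.2 ⟨mem_univ _,
        Fin.lt_def.2 (by have := (mem_filter.1 hj).2; omega), hk j i (mem_filter.1 hj).2 hki⟩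
  · calc l = #{j : Fin n | n - l ≤ (j : ℕ)} := by rw [card_filter_le_val]; omega
      _ ≤ _ := card_le_card fun j hj => mem_filter.2 ⟨mem_univ _,
        Fin.lt_def.2 (by have := (mem_filter.1 hj).2; omega), hl i j hil (mem_filter.1 hj).2⟩

lemma isSkewSplitAt_of_forall_mmpMatch (hσ : avoids132 σ) (hn : k + l < n)
    (h : ∀ i : Fin n, k ≤ (i : ℕ) → (i : ℕ) < n - l → mmpMatch 0 k 0 l σ i) :
    IsSkewSplitAt k σ ∧ IsSkewSplitAt (n - l) σ := by
  have below_left : ∀ i j : Fin n, k ≤ (i : ℕ) → (i : ℕ) < n - l → (j : ℕ) < k → σ i < σ j :=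
    fun i _ hki hil hj => apply_lt_of_le_card_larger_before hσ (h i hki hil).2.1 hj
  -- `d` is the last middle position: its `l` smaller later entries are all the later entries.
  let d : Fin n := ⟨n - 1 - l, by omega⟩
  have hd : (d : ℕ) = n - 1 - l := rfl
  have hkd : k ≤ (d : ℕ) := by omega
  have hdl : (d : ℕ) < n - l := by omega
  have above_right_of_d : ∀ q : Fin n, n - l ≤ (q : ℕ) → σ q < σ d := fun q hq =>
    forall_gt_of_le_card_filter (i := d) (p := fun t => σ t < σ d)
      (by have := (h d hkd hdl).2.2.2; omega) (Fin.lt_def.2 (by omega))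
  have above_right : ∀ i q : Fin n, k ≤ (i : ℕ) → (i : ℕ) < n - l → n - l ≤ (q : ℕ) →
      σ q < σ i := by
    intro i q hki hil hq
    rcases (show (i : ℕ) ≤ d by omega).lt_or_eq with hid | hid
    · by_contra! hσiq
      exact hσ ⟨i, d, q, Fin.lt_def.2 hid, Fin.lt_def.2 (by omega),
        hσiq.lt_of_ne (σ.injective.ne (Fin.ne_of_lt (Fin.lt_def.2 (by omega)))),
        above_right_of_d q hq⟩
    · rw [Fin.ext hid]
      exact above_right_of_d q hq
  refine ⟨fun j r hj hr => ?_, fun r q hr hq => ?_⟩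
  · rcases lt_or_ge (r : ℕ) (n - l) with hrl | hrl
    · exact below_left r j hr hrl hj
    · exact (above_right_of_d r hrl).trans (below_left d j hkd hdl hj)
  · rcases lt_or_ge (r : ℕ) k with hrk | hrk
    · exact (above_right_of_d q hq).trans (below_left d r hkd hdl hrk)
    · exact above_right r q hrk hr hq

lemma mmp_eq_iff_isSkewSplitAt (hσ : avoids132 σ) (hn : k + l < n) :
    mmp 0 k 0 l σ = n - k - l ↔ IsSkewSplitAt k σ ∧ IsSkewSplitAt (n - l) σ := by
  rw [mmp_eq_iff_forall_mmpMatch]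
  exact ⟨isSkewSplitAt_of_forall_mmpMatch k l σ hσ hn,
    fun h _ => mmpMatch_of_isSkewSplitAt k l σ h.1 h.2⟩

end Mesh

theorem stmt18_general (k l n : ℕ) (hn : k + l + 1 ≤ n) :
    (∀ σ : Equiv.Perm (Fin n), avoids132 σ → mmp 0 k 0 l σ ≤ n - k - l) ∧
    Nat.card {σ : Equiv.Perm (Fin n) // avoids132 σ ∧ mmp 0 k 0 l σ = n - k - l} =
      catalan k * catalan l * catalan (n - k - l) := by
  refine ⟨fun σ _ => mmp_le k l σ, ?_⟩
  obtain ⟨m, rfl⟩ : ∃ m, n = k + (m + l) := ⟨n - k - l, by omega⟩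
  have hm : k + (m + l) - k - l = m := by omega
  have hkm : k + (m + l) - l = k + m := by omega
  have hextremal : ∀ σ : Perm (Fin (k + (m + l))),
      avoids132 σ ∧ mmp 0 k 0 l σ = k + (m + l) - k - l ↔
        avoids132 σ ∧ IsSkewSplitAt k σ ∧ IsSkewSplitAt (k + m) σ := fun σ =>
    and_congr_right fun hσ => hkm ▸ mmp_eq_iff_isSkewSplitAt k l σ hσ (by omega)
  rw [Nat.card_congr (subtypeEquivRight hextremal), card_avoids132_isSkewSplitAt_isSkewSplitAt,
    hm, numAvoiding132_eq_catalan, numAvoiding132_eq_catalan, numAvoiding132_eq_catalan]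
  ring

theorem stmt18 (k l n : ℕ) (hk : 1 ≤ k) (hl : 1 ≤ l) (hn : k + l + 1 ≤ n) :
    (∀ σ : Equiv.Perm (Fin n), avoids132 σ → mmp 0 k 0 l σ ≤ n - k - l) ∧
    Nat.card {σ : Equiv.Perm (Fin n) // avoids132 σ ∧ mmp 0 k 0 l σ = n - k - l} =
      catalan k * catalan l * catalan (n - k - l) :=
  stmt18_general k l n hn
end

section
/- For n ≥ 2, the number of 132-avoiding permutations of length n with no match of MMP(0,1,0,1) equals 1 + binom(n,2); equivalently, a 132-avoiding permutation has no match of MMP(0,1,0,1) if and only if it also avoids the classical pattern 321. -/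
open Finset

/-- σ avoids the classical pattern 321. -/
def avoids321 {n : ℕ} (σ : Equiv.Perm (Fin n)) : Prop :=
  ¬ ∃ i j k : Fin n, i < j ∧ j < k ∧ σ k < σ j ∧ σ j < σ i

def rotFun (n a b : ℕ) (hb : b ≤ n) (p : Fin n) : Fin n :=
  if h : p.val < b then ⟨(p.val + a) % b, lt_of_lt_of_le (Nat.mod_lt _ (by omega)) hb⟩ else p

def rotPerm (n a b : ℕ) (ha : a ≤ b) (hb : b ≤ n) : Equiv.Perm (Fin n) where
  toFun := rotFun n a b hb
  invFun := rotFun n (b - a) b hb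
  left_inv := by
    intro p
    unfold rotFun
    by_cases h : p.val < b
    · rw [dif_pos h, dif_pos (Nat.mod_lt _ (by omega))]
      ext
      simp only [Nat.mod_add_mod]
      have : p.val + a + (b - a) = p.val + b := by omega
      rw [this, Nat.add_mod_right, Nat.mod_eq_of_lt h]
    · rw [dif_neg h, dif_neg h]
  right_inv := by
    intro p
    unfold rotFun
    by_cases h : p.val < b
    · rw [dif_pos h, dif_pos (Nat.mod_lt _ (by omega))]
      ext
      simp only [Nat.mod_add_mod]
      have : p.val + (b - a) + a = p.val + b := by omega
      rw [this, Nat.add_mod_right, Nat.mod_eq_of_lt h]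
    · rw [dif_neg h, dif_neg h]

lemma rotPerm_apply_val (n a b : ℕ) (ha : a ≤ b) (hb : b ≤ n) (p : Fin n) :
    ((rotPerm n a b ha hb) p).val =
      if p.val < b - a then p.val + a else if p.val < b then p.val + a - b else p.val := by
  show (rotFun n a b hb p).val = _
  unfold rotFun
  by_cases h : p.val < b
  · rw [dif_pos h]
    by_cases h2 : p.val < b - a
    · rw [if_pos h2]
      exact Nat.mod_eq_of_lt (by omega)
    · rw [if_neg h2, if_pos h]
      show (p.val + a) % b = _
      conv_lhs => rw [show p.val + a = (p.val + a - b) + b by omega]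
      rw [Nat.add_mod_right, Nat.mod_eq_of_lt (by omega)]
  · rw [dif_neg h, if_neg (by omega), if_neg h]

lemma rotPerm_avoids132 (n a b : ℕ) (ha : a ≤ b) (hb : b ≤ n) :
    avoids132 (rotPerm n a b ha hb) := by
  rintro ⟨i, j, k, hij, hjk, h1, h2⟩
  rw [Fin.lt_def] at hij hjk
  have v1 := rotPerm_apply_val n a b ha hb i
  have v2 := rotPerm_apply_val n a b ha hb j
  have v3 := rotPerm_apply_val n a b ha hb k
  rw [Fin.lt_def, v1, v3] at h1
  rw [Fin.lt_def, v3, v2] at h2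
  split_ifs at h1 h2 <;> omega

lemma rotPerm_avoids321 (n a b : ℕ) (ha : a ≤ b) (hb : b ≤ n) :
    avoids321 (rotPerm n a b ha hb) := by
  rintro ⟨i, j, k, hij, hjk, h1, h2⟩
  rw [Fin.lt_def] at hij hjk
  have v1 := rotPerm_apply_val n a b ha hb i
  have v2 := rotPerm_apply_val n a b ha hb j
  have v3 := rotPerm_apply_val n a b ha hb k
  rw [Fin.lt_def, v3, v2] at h1
  rw [Fin.lt_def, v2, v1] at h2
  split_ifs at h1 h2 <;> omega

lemma one_avoids132 {n : ℕ} : avoids132 (1 : Equiv.Perm (Fin n)) := by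
  rintro ⟨i, j, k, hij, hjk, h1, h2⟩
  simp only [Equiv.Perm.one_apply] at h1 h2
  exact absurd h2 hjk.asymm

lemma one_avoids321 {n : ℕ} : avoids321 (1 : Equiv.Perm (Fin n)) := by
  rintro ⟨i, j, k, hij, hjk, h1, h2⟩
  simp only [Equiv.Perm.one_apply] at h1 h2
  exact absurd h1 hjk.asymm

lemma classify {n : ℕ} (hn : 0 < n) (σ : Equiv.Perm (Fin n))
    (h132 : avoids132 σ) (h321 : avoids321 σ) (hne : σ ≠ 1) :
    ∃ a b, ∃ (ha : a ≤ b) (hb : b ≤ n), 1 ≤ a ∧ a < b ∧ σ = rotPerm n a b ha hb := by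
  have H132 : ∀ i j k : Fin n, i.val < j.val → j.val < k.val →
      (σ i).val < (σ k).val → (σ k).val < (σ j).val → False := by
    intro i j k h1 h2 h3 h4
    exact h132 ⟨i, j, k, h1, h2, h3, h4⟩
  have H321 : ∀ i j k : Fin n, i.val < j.val → j.val < k.val →
      (σ k).val < (σ j).val → (σ j).val < (σ i).val → False := by
    intro i j k h1 h2 h3 h4
    exact h321 ⟨i, j, k, h1, h2, h3, h4⟩
  have hinj : ∀ p q : Fin n, σ p = σ q → p = q := fun p q h => σ.injective h
  set z : Fin n := ⟨0, hn⟩ with hz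
  set a : ℕ := (σ z).val with hadef
  set M : Fin n := σ.symm z with hM
  have hσM : σ M = z := σ.apply_symm_apply z
  set m : ℕ := M.val with hmdef
  -- case a = 0 : σ = 1, contradiction
  by_cases ha0 : a = 0
  · exfalso
    apply hne
    have hz0 : σ z = z := by
      ext; exact ha0
    have hz0v : (σ z).val = 0 := by rw [hz0]
    have hmono : StrictMono ⇑σ := by
      intro q r hqr
      rcases lt_trichotomy (σ q) (σ r) with h | h | h
      · exact h
      · exact absurd (σ.injective h) hqr.ne
      · exfalso
        rw [Fin.lt_def] at hqr h
        rcases Nat.eq_zero_or_pos q.val with hq0 | hq0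
        · have : q = z := by ext; exact hq0
          rw [this, hz0v] at h
          omega
        · have hr0 : 0 < (σ r).val := by
            rcases Nat.eq_zero_or_pos (σ r).val with h0 | h0
            · exfalso
              have : σ r = σ z := by ext; rw [hz0v]; exact h0
              have := σ.injective this
              rw [this] at hqr
              simp [hz] at hqr
            · exact h0
          exact H132 z q r hq0 hqr (by omega) h
    have hfun : ⇑σ = id := by
      have h1 : StrictMono (id : Fin n → Fin n) := strictMono_id
      have h2 : Set.range ⇑σ = Set.range (id : Fin n → Fin n) := by
        rw [Equiv.range_eq_univ, Set.range_id]
      have hw : WellFoundedLT (Fin n) := inferInstance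
      exact (hmono.range_inj h1).1 h2
    ext p : 1
    rw [Equiv.Perm.one_apply]
    exact congrFun hfun p
  -- main case : a ≥ 1
  have ha1 : 1 ≤ a := Nat.one_le_iff_ne_zero.mpr ha0
  have hm1 : 1 ≤ m := by
    rcases Nat.eq_zero_or_pos m with h0 | h0
    · exfalso; apply ha0
      have : M = z := by ext; exact h0
      rw [this] at hσM
      rw [hadef, hσM]
    · exact h0
  have hmn : m < n := M.isLt
  -- L1 : increasing on [0, m)
  have L1 : ∀ p q : Fin n, p.val < q.val → q.val < m → (σ p).val < (σ q).val := by
    intro p q hpq hqm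
    rcases lt_trichotomy ((σ p).val) ((σ q).val) with h | h | h
    · exact h
    · exact absurd (hinj p q (by ext; exact h)) (by intro e; rw [e] at hpq; omega)
    · exfalso
      have hq0 : 0 < (σ q).val := by
        rcases Nat.eq_zero_or_pos (σ q).val with h0 | h0
        · exfalso
          have : σ q = σ M := by ext; rw [hσM]; exact h0
          have := hinj _ _ this
          rw [this] at hqm; omega
        · exact h0
      have hσMv : (σ M).val = 0 := by rw [hσM]
      exact H321 p q M hpq hqm (by omega) h
  -- L2 : increasing on [m, n)
  have L2 : ∀ p q : Fin n, m ≤ p.val → p.val < q.val → (σ p).val < (σ q).val := by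
    intro p q hmp hpq
    have hq0 : 0 < (σ q).val := by
      rcases Nat.eq_zero_or_pos (σ q).val with h0 | h0
      · exfalso
        have : σ q = σ M := by ext; rw [hσM]; exact h0
        have := hinj _ _ this
        rw [this] at hpq; omega
      · exact h0
    rcases Nat.eq_or_lt_of_le hmp with he | hlt
    · have : p = M := by ext; omega
      rw [this, hσM]
      exact hq0
    · rcases lt_trichotomy ((σ p).val) ((σ q).val) with h | h | h
      · exact h
      · exact absurd (hinj p q (by ext; exact h)) (by intro e; rw [e] at hpq; omega)
      · exfalso
        have hσMv : (σ M).val = 0 := by rw [hσM]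
        exact H132 M p q hlt hpq (by omega) h
  -- L4 : prefix values ≥ a
  have L4 : ∀ p : Fin n, p.val < m → a ≤ (σ p).val := by
    intro p hpm
    rcases Nat.eq_zero_or_pos p.val with h0 | h0
    · have : p = z := by ext; exact h0
      rw [this]
    · exact le_of_lt (L1 z p h0 hpm)
  -- L3
  have L3 : ∀ q : Fin n, m < q.val → a < (σ q).val →
      ∀ p : Fin n, p.val < m → (σ p).val < (σ q).val := by
    intro q hmq haq p hpm
    rcases lt_trichotomy ((σ p).val) ((σ q).val) with h | h | h
    · exact h
    · exact absurd (hinj p q (by ext; exact h)) (by intro e; rw [e] at hpm; omega)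
    · exfalso
      have hp0 : 0 < p.val := by
        rcases Nat.eq_zero_or_pos p.val with h0 | h0
        · exfalso
          have : p = z := by ext; exact h0
          rw [this] at h
          omega
        · exact h0
      exact H132 z p q hp0 (by omega) haq h
  have hzval : (z : ℕ) = 0 := rfl
  -- Prefix values
  have Prefix : ∀ v : ℕ, ∀ p : Fin n, p.val = v → v < m → (σ p).val = a + v := by
    intro v
    induction v using Nat.strong_induction_on with
    | _ v IH =>
      intro p hpv hvm
      have hlb : a + v ≤ (σ p).val := by
        rcases Nat.eq_zero_or_pos v with h0 | h0
        · have hpz : p = z := by apply Fin.ext; omega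
          rw [hpz]
          omega
        · have hIH := IH (v-1) (by omega) ⟨v-1, by omega⟩ rfl (by omega)
          have := L1 ⟨v-1, by omega⟩ p (show v - 1 < p.val by omega) (by omega)
          omega
      rcases Nat.eq_or_lt_of_le hlb with he | hlt
      · omega
      · exfalso
        have hv1 : 1 ≤ v := by
          rcases Nat.eq_zero_or_pos v with h0 | h0
          · exfalso
            have hpz : p = z := by apply Fin.ext; omega
            rw [hpz] at hlt
            omega
          · exact h0
        have hvn : a + v < n := lt_of_lt_of_le hlt (le_of_lt (σ p).isLt)
        set P : Fin n := σ.symm ⟨a + v, by omega⟩ with hP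
        have hσP : σ P = ⟨a + v, by omega⟩ := σ.apply_symm_apply _
        have hσPv : (σ P).val = a + v := by rw [hσP]
        have hPm : P.val < m := by
          by_contra hge
          push_neg at hge
          rcases Nat.eq_or_lt_of_le hge with he2 | hlt2
          · have hPM : P = M := by apply Fin.ext; omega
            rw [hPM, hσM] at hσP
            have : (0:ℕ) = a + v := congrArg Fin.val hσP
            omega
          · have := L3 P hlt2 (by omega) p (by omega)
            omega
        rcases lt_trichotomy P.val v with hc | hc | hc
        · have := IH P.val (by omega) P rfl (by omega)
          omega
        · have : P = p := by apply Fin.ext; omega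
          rw [this] at hσPv
          omega
        · have := L1 p P (by omega) hPm
          omega
  have hab : a + m ≤ n := by
    have h1 := Prefix (m-1) ⟨m-1, by omega⟩ rfl (by omega)
    have h2 := (σ (⟨m-1, by omega⟩ : Fin n)).isLt
    omega
  -- Mid values
  have Mid : ∀ t : ℕ, ∀ ht : t < a, (σ (⟨m + t, by omega⟩ : Fin n)).val = t := by
    intro t
    induction t using Nat.strong_induction_on with
    | _ t IH =>
      intro ht
      set P : Fin n := σ.symm ⟨t, by omega⟩ with hP
      have hσP : σ P = ⟨t, by omega⟩ := σ.apply_symm_apply _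
      have hσPv : (σ P).val = t := by rw [hσP]
      have hPge : m ≤ P.val := by
        by_contra hlt
        push_neg at hlt
        have := L4 P hlt
        omega
      rcases Nat.eq_zero_or_pos t with ht0 | ht0
      · have hPM : (⟨m + t, by omega⟩ : Fin n) = M := by
          apply Fin.ext
          show m + t = (M : ℕ)
          omega
        rw [hPM, hσM]
        omega
      · have hprev := IH (t-1) (by omega) (by omega)
        have hPle : P.val ≤ m + t := by
          by_contra hgt
          push_neg at hgt
          have h1 := L2 ⟨m + (t-1), by omega⟩ ⟨m + t, by omega⟩
            (show m ≤ m + (t-1) by omega) (show m + (t-1) < m + t by omega)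
          have h2 := L2 ⟨m + t, by omega⟩ P (show m ≤ m + t by omega)
            (show m + t < P.val by omega)
          omega
        rcases Nat.lt_or_ge P.val (m+t) with hc | hc
        · have hs := IH (P.val - m) (by omega) (by omega)
          have hePP : (⟨m + (P.val - m), by omega⟩ : Fin n) = P := by
            apply Fin.ext
            show m + ((P : ℕ) - m) = (P : ℕ)
            omega
          rw [hePP] at hs
          omega
        · have hePP : (⟨m + t, by omega⟩ : Fin n) = P := by
            apply Fin.ext
            show m + t = (P : ℕ)
            omega
          rw [hePP]
          exact hσPv
  -- Tail values
  have TailLB : ∀ v : ℕ, ∀ (hv : m + a ≤ v) (hvn : v < n), v ≤ (σ (⟨v, hvn⟩ : Fin n)).val := by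
    intro v
    induction v using Nat.strong_induction_on with
    | _ v IH =>
      intro hv hvn
      have hge : a + m ≤ (σ (⟨v, hvn⟩ : Fin n)).val := by
        by_contra hlt
        push_neg at hlt
        set w := (σ (⟨v, hvn⟩ : Fin n)).val with hw
        rcases Nat.lt_or_ge w a with hwa | hwa
        · have h1 := Mid w hwa
          have he : σ (⟨m + w, by omega⟩ : Fin n) = σ (⟨v, hvn⟩ : Fin n) := by
            apply Fin.ext
            rw [h1]
          have h3 : (m + w : ℕ) = v := by
            have h2 := congrArg Fin.val (σ.injective he)
            exact h2
          omega
        · have h1 := Prefix (w - a) ⟨w - a, by omega⟩ rfl (by omega)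
          have he : σ (⟨w - a, by omega⟩ : Fin n) = σ (⟨v, hvn⟩ : Fin n) := by
            apply Fin.ext
            rw [h1]
            omega
          have h3 : (w - a : ℕ) = v := by
            have h2 := congrArg Fin.val (σ.injective he)
            exact h2
          omega
      rcases Nat.eq_or_lt_of_le hv with he | hlt
      · omega
      · have h1 := IH (v-1) (by omega) (by omega) (by omega)
        have h2 := L2 ⟨v-1, by omega⟩ ⟨v, hvn⟩ (show m ≤ v - 1 by omega)
          (show v - 1 < v by omega)
        omega
  have TailUB : ∀ d v : ℕ, n - v = d → m + a ≤ v → ∀ hvn : v < n,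
      (σ (⟨v, hvn⟩ : Fin n)).val ≤ v := by
    intro d
    induction d using Nat.strong_induction_on with
    | _ d IH =>
      intro v hd hv hvn
      rcases Nat.eq_or_lt_of_le (Nat.succ_le_of_lt hvn) with he | hlt
      · have := (σ (⟨v, hvn⟩ : Fin n)).isLt
        omega
      · have h1 := IH (n - (v+1)) (by omega) (v+1) rfl (by omega) (by omega)
        have h2 := L2 ⟨v, hvn⟩ ⟨v+1, by omega⟩ (show m ≤ v by omega)
          (show v < v + 1 by omega)
        omega
  -- conclusion
  have haab : a ≤ a + m := by omega
  have hbn : a + m ≤ n := hab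
  refine ⟨a, a + m, haab, hbn, ha1, by omega, ?_⟩
  apply Equiv.ext
  intro p
  apply Fin.ext
  rw [rotPerm_apply_val n a (a+m) haab hbn p]
  rcases Nat.lt_or_ge p.val m with hc | hc
  · rw [if_pos (show p.val < a + m - a by omega)]
    have := Prefix p.val p rfl hc
    omega
  · rcases Nat.lt_or_ge p.val (a+m) with hc2 | hc2
    · rw [if_neg (show ¬ p.val < a + m - a by omega), if_pos hc2]
      have h1 := Mid (p.val - m) (by omega)
      have hePP : (⟨m + (p.val - m), by omega⟩ : Fin n) = p := by
        apply Fin.ext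
        show m + ((p : ℕ) - m) = (p : ℕ)
        omega
      rw [hePP] at h1
      omega
    · rw [if_neg (show ¬ p.val < a + m - a by omega), if_neg (by omega)]
      have h1 := TailLB p.val (by omega) p.isLt
      have h2 := TailUB (n - p.val) p.val rfl (by omega) p.isLt
      have hePP : (⟨p.val, p.isLt⟩ : Fin n) = p := rfl
      rw [hePP] at h1 h2
      omega

lemma pairs_card (n : ℕ) :
    ((Finset.univ : Finset (Fin n × Fin n)).filter fun q => q.1 < q.2).card = n.choose 2 := by
  classical
  rw [Finset.card_eq_sum_card_fiberwise (f := Prod.snd) (t := Finset.univ)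
    (fun x _ => Finset.mem_univ _)]
  have hfib : ∀ y : Fin n,
      (((Finset.univ : Finset (Fin n × Fin n)).filter fun q => q.1 < q.2).filter
        fun q => q.snd = y).card = y.val := by
    intro y
    have hset : (((Finset.univ : Finset (Fin n × Fin n)).filter fun q => q.1 < q.2).filter
        fun q => q.snd = y) = (Finset.Iio y) ×ˢ {y} := by
      ext q
      simp only [Finset.mem_filter, Finset.mem_univ, true_and, Finset.mem_product,
        Finset.mem_Iio, Finset.mem_singleton]
      constructor
      · rintro ⟨h1, h2⟩
        exact ⟨h2 ▸ h1, h2⟩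
      · rintro ⟨h1, h2⟩
        exact ⟨h2.symm ▸ h1, h2⟩
    rw [hset, Finset.card_product, Fin.card_Iio, Finset.card_singleton, mul_one]
  rw [Finset.sum_congr rfl (fun y _ => hfib y)]
  rw [Fin.sum_univ_eq_sum_range (fun i => i) n]
  rw [Finset.sum_range_id, Nat.choose_two_right]

def rotPerm' (n a b : ℕ) : Equiv.Perm (Fin n) :=
  if h : a ≤ b ∧ b ≤ n then rotPerm n a b h.1 h.2 else 1

lemma rotPerm'_eq (n a b : ℕ) (ha : a ≤ b) (hb : b ≤ n) :
    rotPerm' n a b = rotPerm n a b ha hb := dif_pos ⟨ha, hb⟩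

lemma rotPerm'_val (n a b : ℕ) (ha : a ≤ b) (hb : b ≤ n) (p : Fin n) :
    ((rotPerm' n a b) p).val =
      if p.val < b - a then p.val + a else if p.val < b then p.val + a - b else p.val := by
  rw [rotPerm'_eq n a b ha hb]
  exact rotPerm_apply_val n a b ha hb p

lemma rotPerm'_ne_one (n a b : ℕ) (hn : 0 < n) (h1 : 1 ≤ a) (h2 : a < b) (h3 : b ≤ n) :
    rotPerm' n a b ≠ 1 := by
  intro h
  have hv := congrArg (fun τ : Equiv.Perm (Fin n) => ((τ ⟨0, hn⟩ : Fin n) : ℕ)) h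
  simp only [Equiv.Perm.one_apply] at hv
  rw [rotPerm'_val n a b (by omega) h3] at hv
  simp only [Fin.val_mk] at hv
  split_ifs at hv <;> omega

lemma rotPerm'_inj (n a b a' b' : ℕ) (hn : 0 < n) (h1 : 1 ≤ a) (h2 : a < b) (h3 : b ≤ n)
    (h1' : 1 ≤ a') (h2' : a' < b') (h3' : b' ≤ n)
    (heq : rotPerm' n a b = rotPerm' n a' b') : a = a' ∧ b = b' := by
  have hv : ∀ p : Fin n, ((rotPerm' n a b) p : ℕ) = ((rotPerm' n a' b') p : ℕ) :=
    fun p => by rw [heq]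
  have hz := hv ⟨0, hn⟩
  rw [rotPerm'_val n a b (by omega) h3, rotPerm'_val n a' b' (by omega) h3'] at hz
  simp only [Fin.val_mk] at hz
  have ha : a = a' := by split_ifs at hz <;> omega
  subst ha
  refine ⟨rfl, ?_⟩
  have hw := hv ⟨b - a, by omega⟩
  rw [rotPerm'_val n a b (by omega) h3, rotPerm'_val n a b' (by omega) h3'] at hw
  simp only [Fin.val_mk] at hw
  have hw' := hv ⟨b' - a, by omega⟩
  rw [rotPerm'_val n a b (by omega) h3, rotPerm'_val n a b' (by omega) h3'] at hw'
  simp only [Fin.val_mk] at hw'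
  split_ifs at hw hw' <;> omega

lemma count_lemma (n : ℕ) (hn : 0 < n) :
    Nat.card {σ : Equiv.Perm (Fin n) // avoids132 σ ∧ avoids321 σ} = 1 + n.choose 2 := by
  classical
  rw [Nat.card_eq_fintype_card, Fintype.card_subtype]
  have hset : (Finset.univ.filter fun σ : Equiv.Perm (Fin n) => avoids132 σ ∧ avoids321 σ)
      = insert (1 : Equiv.Perm (Fin n))
        ((Finset.univ.filter fun q : Fin n × Fin n => q.1 < q.2).image
          fun q => rotPerm' n (q.1.val + 1) (q.2.val + 1)) := by
    ext σ
    simp only [Finset.mem_filter, Finset.mem_univ, true_and, Finset.mem_insert, Finset.mem_image]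
    constructor
    · rintro ⟨hA, hB⟩
      by_cases h1 : σ = 1
      · exact Or.inl h1
      · obtain ⟨a, b, ha, hb, ha1, hab, hσ⟩ := classify hn σ hA hB h1
        refine Or.inr ⟨(⟨a - 1, by omega⟩, ⟨b - 1, by omega⟩), Fin.mk_lt_mk.mpr (by omega), ?_⟩
        show rotPerm' n ((a - 1) + 1) ((b - 1) + 1) = σ
        rw [show a - 1 + 1 = a by omega, show b - 1 + 1 = b by omega]
        rw [rotPerm'_eq n a b ha hb]
        exact hσ.symm
    · rintro (h1 | ⟨q, hq, hσ⟩)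
      · subst h1; exact ⟨one_avoids132, one_avoids321⟩
      · have hqlt : q.1.val < q.2.val := Fin.lt_def.mp hq
        have he := rotPerm'_eq n (q.1.val + 1) (q.2.val + 1) (by omega) q.2.isLt
        rw [← hσ, he]
        exact ⟨rotPerm_avoids132 _ _ _ _ _, rotPerm_avoids321 _ _ _ _ _⟩
  have hinj : Set.InjOn (fun q : Fin n × Fin n => rotPerm' n (q.1.val + 1) (q.2.val + 1))
      (Finset.univ.filter fun q : Fin n × Fin n => q.1 < q.2) := by
    intro q hq q' hq' he
    have hqlt : q.1.val < q.2.val := Fin.lt_def.mp (Finset.mem_filter.mp hq).2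
    have hqlt' : q'.1.val < q'.2.val := Fin.lt_def.mp (Finset.mem_filter.mp hq').2
    obtain ⟨e1, e2⟩ := rotPerm'_inj n _ _ _ _ hn (by omega) (by omega) q.2.isLt
      (by omega) (by omega) q'.2.isLt he
    have : q.1 = q'.1 := Fin.ext (by omega)
    have : q.2 = q'.2 := Fin.ext (by omega)
    apply Prod.ext <;> [apply Fin.ext; apply Fin.ext] <;> omega
  have hnotmem : (1 : Equiv.Perm (Fin n)) ∉
      ((Finset.univ.filter fun q : Fin n × Fin n => q.1 < q.2).image
        fun q => rotPerm' n (q.1.val + 1) (q.2.val + 1)) := by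
    intro hmem
    obtain ⟨q, hq, he⟩ := Finset.mem_image.mp hmem
    have hqlt : q.1.val < q.2.val := Fin.lt_def.mp (Finset.mem_filter.mp hq).2
    exact rotPerm'_ne_one n _ _ hn (by omega) (by omega) q.2.isLt he
  rw [hset, Finset.card_insert_of_notMem hnotmem, Finset.card_image_of_injOn hinj, pairs_card]
  omega

lemma mmp_zero_iff {n : ℕ} (σ : Equiv.Perm (Fin n)) :
    mmp 0 1 0 1 σ = 0 ↔ avoids321 σ := by
  classical
  have hcard : mmp 0 1 0 1 σ = 0 ↔ ∀ i : Fin n, ¬ mmpMatch 0 1 0 1 σ i := by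
    rw [mmp, Nat.card_eq_zero]
    constructor
    · rintro (h | h) i hi
      · exact h.false ⟨i, hi⟩
      · exact absurd h (not_infinite_iff_finite.mpr (Finite.of_fintype _))
    · intro h
      exact Or.inl ⟨fun x => h x.1 x.2⟩
  have hmatch : ∀ i : Fin n, mmpMatch 0 1 0 1 σ i ↔
      ((∃ j, j < i ∧ σ i < σ j) ∧ ∃ j, i < j ∧ σ j < σ i) := by
    intro i
    unfold mmpMatch
    simp only [Nat.zero_le, true_and, Nat.one_le_iff_ne_zero, ← Nat.pos_iff_ne_zero,
      Finset.card_pos, Finset.filter_nonempty_iff, Finset.mem_univ, true_and]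
  rw [hcard]
  constructor
  · rintro h ⟨i, j, k, hij, hjk, h1, h2⟩
    exact h j ((hmatch j).2 ⟨⟨i, hij, h2⟩, ⟨k, hjk, h1⟩⟩)
  · rintro h i hi
    obtain ⟨⟨j, hj1, hj2⟩, ⟨k, hk1, hk2⟩⟩ := (hmatch i).1 hi
    exact h ⟨j, i, k, hj1, hk1, hk2, hj2⟩

theorem stmt19 (n : ℕ) (hn : 2 ≤ n) :
    Nat.card {σ : Equiv.Perm (Fin n) // avoids132 σ ∧ mmp 0 1 0 1 σ = 0} =
      1 + n.choose 2 ∧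
    (∀ σ : Equiv.Perm (Fin n), avoids132 σ →
      (mmp 0 1 0 1 σ = 0 ↔ avoids321 σ)) := by
  constructor
  · rw [Nat.card_congr (Equiv.subtypeEquivRight (q := fun σ => avoids132 σ ∧ avoids321 σ)
      (fun σ => by rw [mmp_zero_iff]))]
    exact count_lemma n (by omega)
  · exact fun σ _ => mmp_zero_iff σ
end
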